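/- arXiv:1406.4821 — 6 statements merged into one kernel-verified Lean document; each statement's English description precedes it below -/
import Mathlib

section
/- Let n ≥ 1, let p be a prime and k ≥ 2 an integer with p^k ∣ n and p^(k+1) ∤ n. Let u be the unit of ℤ/nℤ determined by the Chinese Remainder Theorem by the conditions u ≡ 1 + p^(k−1) (mod p^k) and u ≡ 1 (mod n/p^k). Then u has multiplicative order dividing p, and for the action of the cyclic subgroup C = ⟨u⟩ of (ℤ/nℤ)ˣ on the additive group ℤ/nℤ by multiplication, the first group cohomology H¹(C, ℤ/nℤ) is trivial if p is odd or (p = 2 and k > 2), and has exactly 2 elements if p = 2 and k = 2. -/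
lemma sq_zero_pow {R : Type*} [CommRing R] {t : R} (ht : t ^ 2 = 0) (i : ℕ) :
    (1 + t) ^ i = 1 + (i : R) * t := by
  induction i with
  | zero => simp
  | succ j ih =>
    rw [pow_succ, ih]
    have : (1 + (j : R) * t) * (1 + t) = 1 + ((j : R) + 1) * t + (j : R) * t ^ 2 := by ring
    rw [this, ht]
    push_cast
    ring

lemma int_dvd_binom (p k : ℕ) (hp : 1 ≤ p) (hk : 2 ≤ k) :
    (p : ℤ) ^ k ∣ (1 + (p : ℤ) ^ (k - 1)) ^ p - 1 := by
  set x : ℤ := (p : ℤ) ^ (k - 1) with hx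
  have := add_pow x 1 p
  rw [add_comm] at this
  have hexp : (1 + x) ^ p - 1 = ∑ i ∈ Finset.Ico 1 (p + 1), x ^ i * (p.choose i : ℤ) := by
    rw [this]
    rw [Finset.range_eq_Ico, Finset.sum_eq_sum_Ico_succ_bot (by omega : 0 < p + 1)]
    simp only [pow_zero, one_mul, Nat.choose_zero_right, Nat.cast_one, one_pow, mul_one]
    rw [add_comm, add_sub_cancel_right]
  rw [hexp]
  apply Finset.dvd_sum
  intro i hi
  simp only [Finset.mem_Ico] at hi
  rcases eq_or_lt_of_le hi.1 with h1 | h2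
  · rw [← h1]
    simp only [pow_one, Nat.choose_one_right]
    rw [hx, ← pow_succ]
    rw [show k - 1 + 1 = k by omega]
  · apply Dvd.dvd.mul_right
    rw [hx, ← pow_mul]
    refine pow_dvd_pow _ ?_
    calc k ≤ 2 * (k - 1) := by omega
    _ ≤ (k-1) * i := by rw [mul_comm]; exact Nat.mul_le_mul_left _ (by omega)

lemma card_subtype_congr {α β : Type*} (e : α ≃ β) {pa : α → Prop} {pb : β → Prop}
    (h : ∀ a, pa a ↔ pb (e a)) : Nat.card {a // pa a} = Nat.card {b // pb b} :=
  Nat.card_congr (e.subtypeEquiv h)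

lemma card_ker_mul_prod {R S : Type*} [CommRing R] [CommRing S] (c : R) (d : S) :
    Nat.card {z : R × S // (c, d) * z = 0} = Nat.card {x : R // c * x = 0} * Nat.card {y : S // d * y = 0} := by
  rw [← Nat.card_prod]
  apply Nat.card_congr
  refine (Equiv.subtypeEquivRight ?_).trans (Equiv.subtypeProdEquivProd)
  rintro ⟨a, b⟩
  simp [Prod.ext_iff]

lemma card_ker_unit {R : Type*} [CommRing R] {r : R} (h : IsUnit r) :
    Nat.card {y : R // r * y = 0} = 1 := by
  rw [Nat.card_eq_one_iff_unique]
  constructor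
  · constructor
    rintro ⟨a, ha⟩ ⟨b, hb⟩
    have ha' : a = 0 := by rwa [h.mul_right_eq_zero] at ha
    have hb' : b = 0 := by rwa [h.mul_right_eq_zero] at hb
    simp [ha', hb']
  · exact ⟨⟨0, mul_zero r⟩⟩

lemma card_im_mul_prod {R S : Type*} [CommRing R] [CommRing S] (c : R) (d : S) :
    Nat.card {z : R × S // ∃ w : R × S, (c, d) * w = z} =
      Nat.card {x : R // ∃ w, c * w = x} * Nat.card {y : S // ∃ w, d * w = y} := by
  rw [← Nat.card_prod]
  apply Nat.card_congr
  refine (Equiv.subtypeEquivRight ?_).trans (Equiv.subtypeProdEquivProd)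
  rintro ⟨a, b⟩
  constructor
  · rintro ⟨⟨w1, w2⟩, hw⟩
    rw [Prod.ext_iff] at hw
    exact ⟨⟨w1, hw.1⟩, ⟨w2, hw.2⟩⟩
  · rintro ⟨⟨w1, h1⟩, ⟨w2, h2⟩⟩
    exact ⟨(w1, w2), by simp [Prod.ext_iff, h1, h2]⟩

lemma card_ker_mul_equiv {R S : Type*} [CommRing R] [CommRing S] (e : R ≃+* S) (r : R) :
    Nat.card {x : R // r * x = 0} = Nat.card {y : S // e r * y = 0} := by
  apply Nat.card_congr
  refine Equiv.subtypeEquiv e.toEquiv (fun a => ?_)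
  constructor
  · intro h
    show e r * e a = 0
    rw [← map_mul, h, map_zero]
  · intro h
    apply e.injective
    rw [map_mul, map_zero]
    exact h

lemma card_im_mul_equiv {R S : Type*} [CommRing R] [CommRing S] (e : R ≃+* S) (r : R) :
    Nat.card {x : R // ∃ w, r * w = x} = Nat.card {y : S // ∃ w, e r * w = y} := by
  apply Nat.card_congr
  refine Equiv.subtypeEquiv e.toEquiv (fun a => ?_)
  constructor
  · rintro ⟨w, rfl⟩
    exact ⟨e w, (map_mul e r w).symm⟩
  · rintro ⟨w, hw⟩
    refine ⟨e.symm w, e.injective ?_⟩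
    rw [map_mul]
    rw [RingEquiv.apply_symm_apply]
    exact hw

lemma aux_card4 : Nat.card {x : ZMod 4 // ∃ w, ((2:ℕ) : ZMod 4) ^ (2 - 1) * w = x} = 2 := by
  have h3 : Fintype.card {x : ZMod 4 // ∃ w, ((2:ℕ) : ZMod 4) ^ (2 - 1) * w = x} = 2 := by
    decide
  exact Nat.card_eq_fintype_card.trans h3

theorem h1_cyclic_alpha_p
    (n : ℕ) (hn : 1 ≤ n) (p k : ℕ) (hp : p.Prime) (hk : 2 ≤ k)
    (hdvd : p ^ k ∣ n) (hndvd : ¬ p ^ (k + 1) ∣ n)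
    (u : (ZMod n)ˣ)
    (hu₁ : (ZMod.castHom hdvd (ZMod (p ^ k))) (u : ZMod n) =
      1 + (p : ZMod (p ^ k)) ^ (k - 1))
    (hu₂ : (ZMod.castHom (Nat.div_dvd_of_dvd hdvd) (ZMod (n / p ^ k))) (u : ZMod n) = 1) :
    orderOf u ∣ p ∧
      ((Odd p ∨ (p = 2 ∧ 2 < k)) →
        Subsingleton (groupCohomology.H1 (Rep.of
          (Representation.ofDistribMulAction ℤ (Subgroup.zpowers u) (ZMod n))))) ∧
      ((p = 2 ∧ k = 2) →
        Nat.card (groupCohomology.H1 (Rep.of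
          (Representation.ofDistribMulAction ℤ (Subgroup.zpowers u) (ZMod n)))) = 2) := by
  haveI : NeZero n := ⟨by omega⟩
  set m := n / p ^ k with hm
  have hppos : 0 < p := hp.pos
  have hp1 : 1 < p := hp.one_lt
  have hpk : 0 < p ^ k := pow_pos hppos k
  have hnm : p ^ k * m = n := Nat.mul_div_cancel' hdvd
  have hmpos : 0 < m := by
    rcases Nat.eq_zero_or_pos m with h | h
    · rw [h, mul_zero] at hnm; omega
    · exact h
  haveI : NeZero m := ⟨by omega⟩
  haveI : NeZero (p ^ k) := ⟨by omega⟩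
  have hpm : ¬ p ∣ m := by
    intro hcon
    exact hndvd (by rw [← hnm, pow_succ]; exact mul_dvd_mul_left _ hcon)
  have hcop : Nat.Coprime (p ^ k) m :=
    Nat.Coprime.pow_left _ (hp.coprime_iff_not_dvd.mpr hpm)
  -- CRT map
  set φ : ZMod n →+* ZMod (p ^ k) × ZMod m :=
    (ZMod.castHom hdvd (ZMod (p ^ k))).prod (ZMod.castHom (Nat.div_dvd_of_dvd hdvd) (ZMod m)) with hφ
  have hφval : ∀ x : ZMod n, φ x = ((x.val : ZMod (p ^ k)), (x.val : ZMod m)) := by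
    intro x
    have : x = ((x.val : ℕ) : ZMod n) := (ZMod.natCast_zmod_val x).symm
    rw [hφ, RingHom.prod_apply]
    conv_lhs => rw [this]
    simp [map_natCast]
  have hφinj : Function.Injective φ := by
    rw [injective_iff_map_eq_zero]
    intro x hx
    rw [hφval, Prod.ext_iff] at hx
    simp only [Prod.fst_zero, Prod.snd_zero, ZMod.natCast_eq_zero_iff] at hx
    have hdx : n ∣ x.val := by
      have h2 : p ^ k * m ∣ x.val := Nat.Coprime.mul_dvd_of_dvd_of_dvd hcop hx.1 hx.2
      rwa [hnm] at h2
    have := ZMod.natCast_eq_zero_iff x.val n |>.mpr hdx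
    rwa [ZMod.natCast_zmod_val x] at this
  have hφbij : Function.Bijective φ := by
    haveI : Fintype (ZMod m) := ZMod.fintype m
    rw [Fintype.bijective_iff_injective_and_card]
    refine ⟨hφinj, ?_⟩
    simp [ZMod.card, ← hnm]
  set ψ : ZMod n ≃+* ZMod (p ^ k) × ZMod m := RingEquiv.ofBijective φ hφbij with hψ
  have hψapp : ∀ x, ψ x = φ x := fun _ => rfl
  -- components of u
  have hψu : ψ (u : ZMod n) = (1 + (p : ZMod (p ^ k)) ^ (k - 1), 1) := by
    rw [hψapp, hφ, RingHom.prod_apply, hu₁, hu₂]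
  set t : ZMod (p ^ k) := (p : ZMod (p ^ k)) ^ (k - 1) with hts
  have hpk0 : (p : ZMod (p ^ k)) ^ k = 0 := by
    have : ((p ^ k : ℕ) : ZMod (p ^ k)) = 0 := ZMod.natCast_self _
    rwa [Nat.cast_pow] at this
  have ht2 : t ^ 2 = 0 := by
    rw [hts, ← pow_mul]
    have h1 : (p : ZMod (p ^ k)) ^ ((k - 1) * 2) = (p : ZMod (p^k)) ^ k * (p : ZMod (p^k)) ^ ((k-1)*2 - k) := by
      rw [← pow_add]; congr 1; omega
    rw [h1, hpk0, zero_mul]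
  have htne : t ≠ 0 := by
    rw [hts]
    intro hcon
    have : ((p ^ (k - 1) : ℕ) : ZMod (p ^ k)) = 0 := by rwa [Nat.cast_pow]
    rw [ZMod.natCast_eq_zero_iff] at this
    exact absurd (Nat.pow_dvd_pow_iff_le_right hp1 |>.mp this) (by omega)
  have hpt : (p : ZMod (p ^ k)) * t = 0 := by
    rw [hts, ← pow_succ']
    rwa [show k - 1 + 1 = k by omega]
  -- u^p = 1
  have hup1 : (1 + t) ^ p = 1 := by
    have hint := int_dvd_binom p k (by omega) hk
    have : (((1 + (p:ℤ) ^ (k-1)) ^ p - 1 : ℤ) : ZMod (p ^ k)) = 0 := by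
      rw [ZMod.intCast_zmod_eq_zero_iff_dvd]
      exact_mod_cast hint
    push_cast at this
    rw [sub_eq_zero] at this
    rw [hts]
    exact_mod_cast this
  have hup : u ^ p = 1 := by
    ext
    push_cast
    apply hφinj
    have : φ ((u : ZMod n) ^ p) = φ (u : ZMod n) ^ p := map_pow φ _ p
    rw [this, ← hψapp, hψu, map_one, Prod.pow_mk, hup1, one_pow]
    rfl
  have hune : u ≠ 1 := by
    intro hcon
    rw [hcon] at hψu
    simp only [Units.val_one, map_one, Prod.ext_iff] at hψu
    exact htne (left_eq_add.mp hψu.1)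
  have hord : orderOf u = p := by
    rcases (Nat.Prime.eq_one_or_self_of_dvd hp _ (orderOf_dvd_of_pow_eq_one hup)) with h | h
    · exact absurd (orderOf_eq_one_iff.mp h) hune
    · exact h
  -- group and representation setup
  set G := Subgroup.zpowers u with hG
  set A := Rep.of (Representation.ofDistribMulAction ℤ G (ZMod n)) with hA
  set gu : G := ⟨u, Subgroup.mem_zpowers u⟩ with hgu
  set U : ZMod n := (u : ZMod n) with hU
  have hordgu : orderOf gu = p := by rw [hgu, Subgroup.orderOf_mk, hord]
  have hgup : gu ^ p = 1 := by
    rw [← hordgu]; exact pow_orderOf_eq_one gu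
  have hpowg : ∀ g : G, ∃ j : ℕ, gu ^ j = g := by
    intro g
    have hfin : IsOfFinOrder u := isOfFinOrder_iff_pow_eq_one.mpr ⟨p, by omega, hup⟩
    obtain ⟨j, hj⟩ := hfin.mem_powers_iff_mem_zpowers.mpr g.2
    exact ⟨j, Subtype.ext (by rw [← hj]; rfl)⟩
  have hρ : ∀ (g : G) (x : ZMod n), A.ρ g x = ((g : (ZMod n)ˣ) : ZMod n) * x := by
    intro g x
    show Representation.ofDistribMulAction ℤ G (ZMod n) g x = _
    rw [Representation.ofDistribMulAction_apply_apply]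
    rfl
  set S : ℕ → ZMod n := fun j => ∑ i ∈ Finset.range j, U ^ i with hS
  have hcoeU : ∀ (j : ℕ), (((gu ^ j : G) : (ZMod n)ˣ) : ZMod n) = U ^ j := by
    intro j
    rw [show ((gu ^ j : G) : (ZMod n)ˣ) = u ^ j from rfl, Units.val_pow_eq_pow_val, hU]
  set ev : groupCohomology.cocycles₁ A → G → ZMod n := fun f g => show ZMod n from f g with hev
  have hcoc : ∀ (f : groupCohomology.cocycles₁ A) (g h : G),
      ev f (g * h) = ((g : (ZMod n)ˣ) : ZMod n) * ev f h + ev f g := by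
    intro f g h
    have h1 := (groupCohomology.mem_cocycles₁_iff (f : G → A)).1 f.2 g h
    have h2 := hρ g (ev f h)
    exact h1.trans (by rw [← h2])
  have hone : ∀ (f : groupCohomology.cocycles₁ A), ev f 1 = 0 := by
    intro f
    exact groupCohomology.cocycles₁_map_one f
  have hval : ∀ (f : groupCohomology.cocycles₁ A) (j : ℕ), ev f (gu ^ j) = S j * ev f gu := by
    intro f j
    induction j with
    | zero => rw [pow_zero, hone]; simp [hS]
    | succ i ih =>
      rw [pow_succ, mul_comm, hcoc f gu (gu ^ i), ih, hS]
      simp only []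
      rw [geom_sum_succ]
      rw [hU]
      ring
  -- norm kills values
  have hNev : ∀ f : groupCohomology.cocycles₁ A, S p * ev f gu = 0 := by
    intro f
    rw [← hval f p, hgup, hone]
  have hSadd : ∀ b c : ℕ, S (b + c) = S b + U ^ b * S c := by
    intro b c
    induction c with
    | zero => simp [hS]
    | succ i ih =>
      rw [show b + (i+1) = (b + i) + 1 from rfl, hS] at *
      simp only [] at *
      rw [Finset.sum_range_succ, ih, Finset.sum_range_succ]
      rw [pow_add]
      ring
  have hSmany : ∀ a : ZMod n, S p * a = 0 → ∀ e b : ℕ, S (b + e * p) * a = S b * a := by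
    intro a ha e
    induction e with
    | zero => simp
    | succ i ih =>
      intro b
      rw [show b + (i+1)*p = (b + i * p) + p by ring, hSadd, add_mul,
        mul_assoc, ha, mul_zero, add_zero, ih b]
  have hSmod : ∀ a : ZMod n, S p * a = 0 → ∀ x y : ℕ, gu ^ x = gu ^ y → S x * a = S y * a := by
    intro a ha x y hxy
    have hmod : x % p = y % p := by
      have := (pow_eq_pow_iff_modEq).mp hxy
      rwa [hordgu] at this
    calc S x * a = S (x % p + (x / p) * p) * a := by rw [Nat.mod_add_div']
    _ = S (x % p) * a := hSmany a ha _ _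
    _ = S (y % p) * a := by rw [hmod]
    _ = S (y % p + (y / p) * p) * a := (hSmany a ha _ _).symm
    _ = S y * a := by rw [Nat.mod_add_div']
  -- determination
  have hext : ∀ f₁ f₂ : groupCohomology.cocycles₁ A, ev f₁ gu = ev f₂ gu → f₁ = f₂ := by
    intro f₁ f₂ h
    apply groupCohomology.cocycles₁_ext
    intro g
    obtain ⟨j, rfl⟩ := hpowg g
    show ev f₁ (gu ^ j) = ev f₂ (gu ^ j)
    rw [hval, hval, h]
  -- construction of a cocycle from a norm-zero value
  have hFexists : ∀ a : ZMod n, S p * a = 0 → ∃ f : groupCohomology.cocycles₁ A, ev f gu = a := by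
    intro a ha
    set J : G → ℕ := fun g => (hpowg g).choose with hJdef
    have hJ : ∀ g : G, gu ^ (J g) = g := fun g => (hpowg g).choose_spec
    set F : G → ZMod n := fun g => S (J g) * a with hF
    have hFmem : F ∈ groupCohomology.cocycles₁ A := by
      rw [groupCohomology.mem_cocycles₁_iff]
      intro g h
      have key : F (g * h) = ((g : (ZMod n)ˣ) : ZMod n) * F h + F g := by
        rw [hF]
        simp only []
        have hg : ((g : (ZMod n)ˣ) : ZMod n) = U ^ (J g) := by
          conv_lhs => rw [← hJ g]
          exact hcoeU (J g)
        rw [hg]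
        have h1 : U ^ J g * (S (J h) * a) + S (J g) * a = S (J g + J h) * a := by
          rw [hSadd]; ring
        rw [h1]
        apply hSmod a ha
        rw [pow_add, hJ, hJ, hJ]
      exact key.trans (by rw [hρ])
    refine ⟨⟨F, hFmem⟩, ?_⟩
    show F gu = a
    rw [hF]
    simp only []
    have : S (J gu) * a = S 1 * a := by
      apply hSmod a ha
      rw [hJ, pow_one]
    rw [this, hS]
    simp
  -- coboundary criterion
  have hcobd : ∀ f : groupCohomology.cocycles₁ A,
      (∃ x : ZMod n, (U - 1) * x = ev f gu) → ⇑f ∈ groupCohomology.coboundaries₁ A := by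
    rintro f ⟨x, hx⟩
    refine ⟨x, ?_⟩
    funext g
    obtain ⟨j, rfl⟩ := hpowg g
    have key : (((gu ^ j : G) : (ZMod n)ˣ) : ZMod n) * x - x = ev f (gu ^ j) := by
      rw [hcoeU, hval f j, ← hx]
      have h2 : S j * ((U - 1) * x) = (S j * (U - 1)) * x := by ring
      rw [h2, hS]
      simp only []
      rw [geom_sum_mul]
      ring
    rw [groupCohomology.d₀₁_hom_apply]
    refine Eq.trans ?_ key
    rw [hρ]
  -- psi computations
  have hψU1 : ψ (U - 1) = (t, 0) := by
    rw [map_sub, hψu, map_one]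
    exact Prod.ext (by simp) (by simp)
  set c : ZMod (p ^ k) := ∑ i ∈ Finset.range p, (1 + t) ^ i with hc
  have hψSp : ψ (S p) = (c, (p : ZMod m)) := by
    rw [hS]
    simp only []
    rw [map_sum, Finset.sum_congr rfl (fun i (_ : i ∈ Finset.range p) => by
      rw [map_pow, hψu, Prod.pow_mk, one_pow])]
    rw [Prod.ext_iff, Prod.fst_sum, Prod.snd_sum]
    constructor
    · simp [hc]
    · simp only []
      rw [Finset.sum_const, Finset.card_range, nsmul_eq_mul, mul_one]
  have hcomp : ∀ a : ZMod n, S p * a = 0 → c * (ψ a).1 = 0 ∧ (p : ZMod m) * (ψ a).2 = 0 := by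
    intro a ha
    have h0 := congrArg ψ ha
    rw [map_mul, hψSp, map_zero] at h0
    rw [Prod.ext_iff] at h0
    exact ⟨h0.1, h0.2⟩
  have hpunit : IsUnit ((p : ℕ) : ZMod m) := by
    rw [ZMod.isUnit_iff_coprime]
    exact hp.coprime_iff_not_dvd.mpr hpm
  have hkey : ∀ a₁ : ZMod (p ^ k), (p : ZMod (p ^ k)) * a₁ = 0 → ∃ y, t * y = a₁ := by
    intro a₁ h
    have h1 : ((p * a₁.val : ℕ) : ZMod (p ^ k)) = 0 := by
      push_cast
      rw [ZMod.natCast_zmod_val]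
      exact h
    rw [ZMod.natCast_eq_zero_iff] at h1
    have h2 : p ^ (k - 1) ∣ a₁.val := by
      have h3 : p * p ^ (k - 1) ∣ p * a₁.val := by
        rw [← pow_succ', show k - 1 + 1 = k by omega]
        exact h1
      exact (mul_dvd_mul_iff_left (by positivity : (p:ℕ) ≠ 0)).mp h3
    obtain ⟨y₀, hy₀⟩ := h2
    refine ⟨(y₀ : ZMod (p ^ k)), ?_⟩
    have h4 : ((p ^ (k-1) * y₀ : ℕ) : ZMod (p ^ k)) = a₁ := by
      rw [← hy₀, ZMod.natCast_zmod_val]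
    rw [← h4]
    push_cast
    rw [hts]
  refine ⟨hord ▸ dvd_refl p, ?_, ?_⟩
  · -- subsingleton case
    intro hcase
    have hcp : ∀ a₁ : ZMod (p ^ k), c * a₁ = 0 → (p : ZMod (p ^ k)) * a₁ = 0 := by
      rcases hcase with hodd | ⟨hp2, hk2⟩
      · obtain ⟨s, hs⟩ := hodd
        have hsum : (∑ i ∈ Finset.range p, i) = s * p := by
          have h2 := Finset.sum_range_id_mul_two p
          have h3 : (∑ i ∈ Finset.range p, i) * 2 = (s * p) * 2 := by
            rw [h2, hs, Nat.add_sub_cancel]; ring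
          omega
        have hcp' : c = (p : ZMod (p ^ k)) := by
          rw [hc, Finset.sum_congr rfl (fun i (_ : i ∈ Finset.range p) => sq_zero_pow ht2 i),
            Finset.sum_add_distrib, Finset.sum_const, Finset.card_range, ← Finset.sum_mul,
            ← Nat.cast_sum, hsum]
          rw [nsmul_eq_mul, mul_one]
          push_cast
          rw [mul_assoc, hpt, mul_zero, add_zero]
        intro a₁ h
        rwa [hcp'] at h
      · subst hp2
        have hcv : c = 2 * (1 + (2 : ZMod (2 ^ k)) ^ (k - 2)) := by
          rw [hc, geom_sum_two, hts]
          have : (2 : ZMod (2 ^ k)) * (2 : ZMod (2 ^ k)) ^ (k - 2) = (2 : ZMod (2 ^ k)) ^ (k - 1) := by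
            rw [← pow_succ', show k - 2 + 1 = k - 1 by omega]
          push_cast
          rw [mul_add, mul_one, this]
          ring
        have hvu : IsUnit (1 + (2 : ZMod (2 ^ k)) ^ (k - 2)) := by
          have hcast : ((2 ^ (k - 2) + 1 : ℕ) : ZMod (2 ^ k)) = 1 + (2 : ZMod (2 ^ k)) ^ (k - 2) := by
            push_cast; ring
          rw [← hcast, ZMod.isUnit_iff_coprime]
          apply Nat.Coprime.pow_right
          rw [Nat.coprime_two_right]
          exact Even.add_one ((Nat.even_pow).mpr ⟨even_two, by omega⟩)
        intro a₁ h
        have h2 : (1 + (2 : ZMod (2 ^ k)) ^ (k - 2)) * (((2:ℕ) : ZMod (2 ^ k)) * a₁) = 0 := by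
          rw [← h, hcv]
          push_cast
          ring
        exact (hvu.mul_right_eq_zero).mp h2
    have htop : ∀ f : groupCohomology.cocycles₁ A, ⇑f ∈ groupCohomology.coboundaries₁ A := by
      intro f
      apply hcobd f
      obtain ⟨h1, h2⟩ := hcomp (ev f gu) (hNev f)
      have ha2 : (ψ (ev f gu)).2 = 0 := (hpunit.mul_right_eq_zero).mp h2
      obtain ⟨y, hy⟩ := hkey _ (hcp _ h1)
      refine ⟨ψ.symm (y, 0), ?_⟩
      apply ψ.injective
      rw [map_mul, hψU1, RingEquiv.apply_symm_apply, Prod.mk_mul_mk, hy, mul_zero]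
      exact Prod.ext rfl ha2.symm
    have hz : ∀ x : groupCohomology.H1 A, x = 0 := fun x =>
      groupCohomology.H1_induction_on x (fun f => (groupCohomology.H1π_eq_zero_iff f).2 (htop f))
    exact ⟨fun a b => (hz a).trans (hz b).symm⟩
  · -- counting case
    rintro ⟨hp2, hk2⟩
    subst hp2
    subst hk2
    have hc0 : c = 0 := by
      rw [hc, geom_sum_two, hts]
      decide
    -- cardinality of cocycles
    have hbij : Function.Bijective (fun f : groupCohomology.cocycles₁ A =>
        (⟨ev f gu, hNev f⟩ : {a : ZMod n // S 2 * a = 0})) := by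
      constructor
      · intro f₁ f₂ h
        exact hext f₁ f₂ (congrArg Subtype.val h)
      · rintro ⟨a, ha⟩
        obtain ⟨f, hf⟩ := hFexists a ha
        exact ⟨f, Subtype.ext hf⟩
    have hcZ : Nat.card (groupCohomology.cocycles₁ A) = Nat.card {a : ZMod n // S 2 * a = 0} :=
      Nat.card_congr (Equiv.ofBijective _ hbij)
    -- cardinality of coboundaries
    have hev2 : ∀ b : groupCohomology.coboundaries₁ A, ∃ x : ZMod n, (U - 1) * x = ev (groupCohomology.coboundariesToCocycles₁ A b) gu := by
      intro b
      obtain ⟨x, hx⟩ := b.2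
      refine ⟨show ZMod n from x, ?_⟩
      have h2 : ((gu : (ZMod n)ˣ) : ZMod n) * (show ZMod n from x) - (show ZMod n from x) = ev (groupCohomology.coboundariesToCocycles₁ A b) gu := by
        refine Eq.trans ?_ (congrFun hx gu)
        rw [groupCohomology.d₀₁_hom_apply, hρ]
      rw [← h2]
      rw [show ((gu : (ZMod n)ˣ) : ZMod n) = U from rfl]
      ring
    have hbij2 : Function.Bijective (fun b : groupCohomology.coboundaries₁ A =>
        (⟨ev (groupCohomology.coboundariesToCocycles₁ A b) gu, hev2 b⟩ : {a : ZMod n // ∃ x : ZMod n, (U - 1) * x = a})) := by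
      constructor
      · intro b₁ b₂ h
        have h' := hext (groupCohomology.coboundariesToCocycles₁ A b₁)
          (groupCohomology.coboundariesToCocycles₁ A b₂) (congrArg Subtype.val h)
        apply Subtype.ext
        exact congrArg (fun f : groupCohomology.cocycles₁ A => f.1) h'
      · rintro ⟨a, x, hx⟩
        refine ⟨⟨(groupCohomology.d₀₁ A).hom x, ⟨x, rfl⟩⟩, Subtype.ext ?_⟩
        show (groupCohomology.d₀₁ A).hom x gu = a
        have h5 : (groupCohomology.d₀₁ A).hom x gu = ((gu : (ZMod n)ˣ) : ZMod n) * x - x := by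
          rw [← hρ]
          rfl
        have key2 : ((gu : (ZMod n)ˣ) : ZMod n) * x - x = a := by
          rw [show ((gu : (ZMod n)ˣ) : ZMod n) = U from rfl, ← hx]
          ring
        exact h5.trans key2
    have hcB : Nat.card (groupCohomology.coboundaries₁ A) =
        Nat.card {a : ZMod n // ∃ x : ZMod n, (U - 1) * x = a} :=
      Nat.card_congr (Equiv.ofBijective _ hbij2)
    -- compute the two cardinalities
    have hK : Nat.card {a : ZMod n // S 2 * a = 0} = 4 := by
      rw [card_ker_mul_equiv ψ (S 2), hψSp, hc0, card_ker_mul_prod, card_ker_unit hpunit, mul_one]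
      rw [Nat.card_congr (Equiv.subtypeUnivEquiv (fun x : ZMod (2 ^ 2) => by rw [zero_mul]))]
      rw [Nat.card_zmod]
      norm_num
    have hIm : Nat.card {a : ZMod n // ∃ x : ZMod n, (U - 1) * x = a} = 2 := by
      rw [card_im_mul_equiv ψ (U - 1), hψU1, card_im_mul_prod]
      have h1 : Nat.card {y : ZMod m // ∃ w, (0 : ZMod m) * w = y} = 1 := by
        rw [Nat.card_eq_one_iff_unique]
        constructor
        · constructor
          rintro ⟨a, w₁, hw₁⟩ ⟨b, w₂, hw₂⟩
          have : a = b := by rw [← hw₁, ← hw₂, zero_mul, zero_mul]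
          simp [this]
        · exact ⟨⟨0, 0, zero_mul 0⟩⟩
      have h2 : Nat.card {x : ZMod (2 ^ 2) // ∃ w, ((2:ℕ) : ZMod (2 ^ 2)) ^ (2 - 1) * w = x} = 2 := by
        exact aux_card4
      rw [hts, h1, h2, mul_one]
    have hH1 : Nat.card (groupCohomology.coboundaries₁ A) * Nat.card (groupCohomology.H1 A) =
        Nat.card (groupCohomology.cocycles₁ A) := by
      have hsurj : Function.Surjective (groupCohomology.H1π A).hom :=
        (ModuleCat.epi_iff_surjective (f := groupCohomology.H1π A)).1 inferInstance
      rw [Submodule.card_eq_card_quotient_mul_card (LinearMap.ker (groupCohomology.H1π A).hom),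
        Nat.card_congr ((groupCohomology.H1π A).hom.quotKerEquivOfSurjective hsurj).toEquiv]
      congr 1
      apply Nat.card_congr
      exact { toFun := fun b => ⟨groupCohomology.coboundariesToCocycles₁ A b,
                (groupCohomology.H1π_eq_zero_iff _).2 b.2⟩
              invFun := fun x => ⟨x.1.1, (groupCohomology.H1π_eq_zero_iff _).1 x.2⟩
              left_inv := fun b => rfl
              right_inv := fun x => rfl }
    rw [hcB, hIm, hcZ, hK] at hH1
    omega
end

section
/- Let G be a finite group with a cyclic normal subgroup N of order n such that the centralizer of N in G equals N, and assume that the exact power of 2 dividing n is not 4 (i.e., if 4 ∣ n then 8 ∣ n). If G is Roquette, then for every prime p, every integer k ≥ 2 with p^k ∣ n and p^(k+1) ∤ n, and every integer e with e ≡ 1 + p^(k−1) (mod p^k) and e ≡ 1 (mod n/p^k), there is no element x ∈ G with x a x⁻¹ = a^e for all a ∈ N. -/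
private lemma conj_elem_pow {G : Type*} [Group G] (N : Subgroup G) (e : ℤ) (w : G)
    (hw : ∀ b ∈ N, w * b * w⁻¹ = b ^ e) {a : G} (ha : a ∈ N) (j : ℕ) :
    w ^ j * a * (w ^ j)⁻¹ = a ^ (e ^ j) := by
  induction j with
  | zero => simp
  | succ j ih =>
    have hmem : a ^ (e ^ j) ∈ N := N.zpow_mem ha _
    calc w ^ (j + 1) * a * (w ^ (j + 1))⁻¹
        = w * (w ^ j * a * (w ^ j)⁻¹) * w⁻¹ := by group
      _ = w * a ^ (e ^ j) * w⁻¹ := by rw [ih]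
      _ = (a ^ (e ^ j)) ^ e := hw _ hmem
      _ = a ^ (e ^ (j + 1)) := by rw [← zpow_mul, ← pow_succ]

private lemma mul_conj_pow {G : Type*} [Group G] (N : Subgroup G) (e : ℤ) (w : G)
    (hw : ∀ b ∈ N, w * b * w⁻¹ = b ^ e) {a : G} (ha : a ∈ N) (j : ℕ) :
    (a * w) ^ j = a ^ (∑ i ∈ Finset.range j, e ^ i) * w ^ j := by
  induction j with
  | zero => simp
  | succ j ih =>
    have key : w ^ j * a = a ^ (e ^ j) * w ^ j := by
      have h := conj_elem_pow N e w hw ha j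
      calc w ^ j * a = (w ^ j * a * (w ^ j)⁻¹) * w ^ j := by group
        _ = a ^ (e ^ j) * w ^ j := by rw [h]
    calc (a * w) ^ (j + 1) = (a * w) ^ j * (a * w) := pow_succ _ _
      _ = a ^ (∑ i ∈ Finset.range j, e ^ i) * (w ^ j * a) * w := by rw [ih]; group
      _ = a ^ (∑ i ∈ Finset.range j, e ^ i) * (a ^ (e ^ j) * w ^ j) * w := by rw [key]
      _ = a ^ ((∑ i ∈ Finset.range j, e ^ i) + e ^ j) * w ^ (j + 1) := by
          rw [zpow_add]; group
      _ = a ^ (∑ i ∈ Finset.range (j + 1), e ^ i) * w ^ (j + 1) := by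
          rw [Finset.sum_range_succ]

theorem roquette_no_alpha_p
    (G : Type*) [Group G] [Finite G] (N : Subgroup G) [N.Normal]
    (hNcyc : IsCyclic N) (n : ℕ) (hn : Nat.card N = n)
    (hcent : Subgroup.centralizer (N : Set G) = N)
    (h2 : 4 ∣ n → 8 ∣ n)
    (hRoquette : ∀ A : Subgroup G, A.Normal → (∀ x ∈ A, ∀ y ∈ A, x * y = y * x) → IsCyclic A) :
    ∀ (p k : ℕ), p.Prime → 2 ≤ k → p ^ k ∣ n → ¬ p ^ (k + 1) ∣ n →
      ∀ e : ℤ, e ≡ 1 + (p : ℤ) ^ (k - 1) [ZMOD (p : ℤ) ^ k] →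
        e ≡ 1 [ZMOD ((n / p ^ k : ℕ) : ℤ)] →
        ¬ ∃ x : G, ∀ a ∈ N, x * a * x⁻¹ = a ^ e := by
  intro p k hp hk hpk hpk1 e he1 he2 hex
  obtain ⟨x, hx⟩ := hex
  have hp1 : 1 < p := hp.one_lt
  have hn0 : 0 < n := by rw [← hn]; exact Nat.card_pos
  set m : ℕ := n / p ^ k with hm_def
  have hnm : n = p ^ k * m := (Nat.mul_div_cancel' hpk).symm
  have hm0 : 0 < m := by
    rcases Nat.eq_zero_or_pos m with h | h
    · rw [h, mul_zero] at hnm; omega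
    · exact h
  have hpm : ¬ p ∣ m := by
    rintro ⟨t, ht⟩
    exact hpk1 ⟨t, by rw [hnm, ht, pow_succ]; ring⟩
  have hk1 : k - 1 + 1 = k := by omega
  have hpk_eq : (p:ℤ) ^ k = (p:ℤ) ^ (k - 1) * (p:ℤ) := by rw [← pow_succ, hk1]
  have hk2 : p = 2 → 3 ≤ k := by
    intro hp2
    by_contra h
    have hkk : k = 2 := by omega
    apply hpk1
    rw [hp2, hkk] at hpk ⊢
    exact h2 (by norm_num at hpk ⊢; exact hpk)
  set c : ℤ := e - 1 with hc_def
  have hc1 : (p : ℤ) ^ (k - 1) ∣ c := by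
    have h := he1.dvd
    have hd : (p : ℤ) ^ (k - 1) ∣ (1 + (p:ℤ) ^ (k - 1) - e) :=
      dvd_trans ⟨(p:ℤ), hpk_eq⟩ h
    have h2' : (p : ℤ) ^ (k - 1) ∣ -(1 + (p:ℤ) ^ (k - 1) - e) + (p:ℤ)^(k-1) :=
      dvd_add (hd.neg_right) dvd_rfl
    convert h2' using 1; rw [hc_def]; ring
  have hcm : (m : ℤ) ∣ c := by
    have h := he2.dvd
    rw [hc_def, show e - 1 = -(1 - e) by ring]
    exact dvd_neg.mpr h
  have hpc : (p : ℤ) ∣ c :=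
    dvd_trans (dvd_pow_self _ (by omega : k - 1 ≠ 0)) hc1
  have hnotpk : ¬ (p : ℤ) ^ k ∣ c := by
    intro hdvd
    have h := he1.dvd
    have h3 : (p : ℤ) ^ k ∣ (p:ℤ) ^ (k - 1) := by
      have := dvd_add hdvd h
      convert this using 1; rfl; rw [hc_def]; ring
    rw [hpk_eq] at h3
    have hne : ((p:ℤ) ^ (k-1)) ≠ 0 := by positivity
    have : (p : ℤ) ∣ 1 := by
      rcases h3 with ⟨t, ht⟩
      have h1 : (p:ℤ)^(k-1) * ((p:ℤ)*t) = (p:ℤ)^(k-1) * 1 := by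
        rw [mul_one, ← mul_assoc, ← ht]
      have h2'' := mul_left_cancel₀ hne h1
      exact ⟨t, h2''.symm⟩
    have := Int.le_of_dvd one_pos this
    have : (1:ℤ) < (p:ℤ) := by exact_mod_cast hp1
    omega
  set σ : ℤ := ∑ i ∈ Finset.range p, e ^ i with hσ_def
  have hgeom : σ * c = e ^ p - 1 := geom_sum_mul e p
  have hcσp : c ∣ σ - (p : ℤ) := by
    have hs : σ - (p:ℤ) = ∑ i ∈ Finset.range p, (e ^ i - 1) := by
      rw [Finset.sum_sub_distrib]; simp [hσ_def]
    rw [hs]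
    exact Finset.dvd_sum fun i _ => ⟨∑ j ∈ Finset.range i, e ^ j, by rw [mul_comm]; exact (geom_sum_mul e i).symm⟩
  have hpσ : (p : ℤ) ∣ σ := by
    have : (p:ℤ) ∣ σ - (p:ℤ) := dvd_trans hpc hcσp
    have := dvd_add this (dvd_refl (p:ℤ))
    convert this using 1; rfl; ring
  have hcop_pm : IsCoprime ((p:ℤ)) ((m:ℤ)) := by
    rw [Int.isCoprime_iff_gcd_eq_one]
    exact_mod_cast (Nat.Prime.coprime_iff_not_dvd hp).mpr hpm
  have hcop_pkm : IsCoprime ((p:ℤ) ^ k) ((m:ℤ)) := hcop_pm.pow_left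
  have hcast : (n : ℤ) = (p:ℤ) ^ k * (m:ℤ) := by exact_mod_cast congrArg (Nat.cast : ℕ → ℤ) hnm
  have hpow : (n : ℤ) ∣ e ^ p - 1 := by
    rw [← hgeom]
    have h1 : ((p:ℤ)) ^ k ∣ σ * c := by
      obtain ⟨a, ha⟩ := hpσ
      obtain ⟨b, hb⟩ := hc1
      exact ⟨a * b, by rw [ha, hb, hpk_eq]; ring⟩
    have h2' : (m : ℤ) ∣ σ * c := Dvd.dvd.mul_left hcm σ
    have := hcop_pkm.mul_dvd h1 h2'
    rw [hcast]; exact this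
  have hσp2 : ((p:ℤ)) ^ 2 ∣ σ - (p : ℤ) := by
    rcases hp.eq_two_or_odd' with hp2 | hodd
    · have hk3 := hk2 hp2
      subst hp2
      have hσ2 : σ = 1 + e := by
        rw [hσ_def]
        rw [Finset.sum_range_succ, Finset.sum_range_succ, Finset.sum_range_zero]
        ring
      have h4c : ((2:ℤ))^2 ∣ c := by
        refine dvd_trans ?_ hc1
        exact pow_dvd_pow _ (by omega)
      have hs2 : σ - ((2:ℕ):ℤ) = c := by rw [hσ2, hc_def]; push_cast; ring
      rw [hs2]; exact_mod_cast h4c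
    · have hbin : ∀ i : ℕ, ((p:ℤ)) ^ 2 ∣ e ^ i - (1 + (i:ℤ) * c) := by
        intro i
        induction i with
        | zero => simp
        | succ i ih =>
          obtain ⟨a, ha⟩ := ih
          obtain ⟨b, hb⟩ := hpc
          refine ⟨a * e + (i:ℤ) * b ^ 2, ?_⟩
          have he' : e = 1 + c := by rw [hc_def]; ring
          push_cast
          calc e ^ (i+1) - (1 + ((i:ℤ)+1) * c) = (e ^ i - (1 + (i:ℤ)*c)) * e + (i:ℤ) * c^2 := by
                rw [pow_succ]; nth_rewrite 3 [he']; ring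
            _ = (p:ℤ)^2 * a * e + (i:ℤ) * ((p:ℤ)*b)^2 := by rw [ha, hb]
            _ = (p:ℤ)^2 * (a * e + (i:ℤ) * b^2) := by ring
      have hsum : ((p:ℤ))^2 ∣ σ - ((p:ℤ) + (∑ i ∈ Finset.range p, (i:ℤ)) * c) := by
        have hs : σ - ((p:ℤ) + (∑ i ∈ Finset.range p, (i:ℤ)) * c)
            = ∑ i ∈ Finset.range p, (e ^ i - (1 + (i:ℤ) * c)) := by
          rw [Finset.sum_sub_distrib, Finset.sum_add_distrib]
          simp [Finset.sum_mul, hσ_def]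
        rw [hs]
        exact Finset.dvd_sum fun i _ => hbin i
      have hT : ((p:ℤ))^2 ∣ (∑ i ∈ Finset.range p, (i:ℤ)) * c := by
        obtain ⟨r, hr⟩ := hodd
        have hTn : (∑ i ∈ Finset.range p, i) * 2 = p * (p - 1) := Finset.sum_range_id_mul_two p
        have hpr : p * (p - 1) = p * r * 2 := by rw [show p - 1 = 2 * r by omega]; ring
        have hTn2 : (∑ i ∈ Finset.range p, i) = p * r := by omega
        have hcast2 : (∑ i ∈ Finset.range p, (i:ℤ)) = ((∑ i ∈ Finset.range p, i : ℕ) : ℤ) := by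
          push_cast; ring
        obtain ⟨b, hb⟩ := hpc
        rw [hcast2, hTn2]
        exact ⟨(r:ℤ) * b, by push_cast; rw [hb]; ring⟩
      have := dvd_add hsum hT
      convert this using 1; rfl; ring
  obtain ⟨w2, hw2⟩ := hσp2
  have hστ : σ = (p:ℤ) * (1 + (p:ℤ) * w2) := by linear_combination hw2
  have hcop_τ_p : IsCoprime (1 + (p:ℤ) * w2) ((p:ℤ)) :=
    (isCoprime_one_left).add_mul_left_left w2
  have hcop_σ_m : IsCoprime σ ((m:ℤ)) := by
    obtain ⟨j, hj⟩ := dvd_trans hcm hcσp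
    have h := hcop_pm.add_mul_left_left j
    have hσj : σ = (p:ℤ) + (m:ℤ) * j := by linear_combination hj
    rwa [← hσj] at h
  have hcop_τ_m : IsCoprime (1 + (p:ℤ) * w2) ((m:ℤ)) :=
    IsCoprime.of_isCoprime_of_dvd_left hcop_σ_m ⟨(p:ℤ), by rw [hστ]; ring⟩
  have hcop_τ_n : IsCoprime (1 + (p:ℤ) * w2) ((n:ℤ)) := by
    rw [hcast]
    exact IsCoprime.mul_right (hcop_τ_p.pow_right) hcop_τ_m
  obtain ⟨u, v, huv⟩ := hcop_τ_n
  have hbez : σ * u + (n:ℤ) * ((p:ℤ) * v) = (p:ℤ) := by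
    rw [hστ]; linear_combination (p:ℤ) * huv
  have hMc : ((p:ℤ) ^ (k-1) * (m:ℤ)) ∣ c := (hcop_pm.pow_left).mul_dvd hc1 hcm
  obtain ⟨c', hc'⟩ := hMc
  have hc'p : ¬ (p:ℤ) ∣ c' := by
    rintro ⟨t, ht⟩
    exact hnotpk ⟨(m:ℤ) * t, by rw [hc', ht, hpk_eq]; ring⟩
  have hprime_int : Prime ((p:ℤ)) := Nat.prime_iff_prime_int.mp hp
  obtain ⟨u2, v2, huv2⟩ := (hprime_int.coprime_iff_not_dvd.mpr hc'p).symm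
  have hbez2 : c * u2 + (n:ℤ) * v2 = (p:ℤ) ^ (k-1) * (m:ℤ) := by
    rw [hc', hcast, hpk_eq]
    linear_combination ((p:ℤ)^(k-1) * (m:ℤ)) * huv2
  ------------------------------------------------------------------
  -- group-theoretic part
  ------------------------------------------------------------------
  haveI := hNcyc
  obtain ⟨g₀, hg₀⟩ := IsCyclic.exists_generator (α := ↥N)
  set a₀ : G := (g₀ : G) with ha₀_def
  have ha₀N : a₀ ∈ N := g₀.2
  have horder : orderOf a₀ = n := by
    rw [Subgroup.orderOf_coe, orderOf_eq_card_of_forall_mem_zpowers hg₀, hn]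
  have hzpow_iff : ∀ t : ℤ, a₀ ^ t = 1 ↔ (n:ℤ) ∣ t := by
    intro t
    rw [← orderOf_dvd_iff_zpow_eq_one, horder]
  have hgen : ∀ a ∈ N, ∃ i : ℤ, a = a₀ ^ i := by
    intro a haN
    obtain ⟨i, hi⟩ := Subgroup.mem_zpowers_iff.mp (hg₀ ⟨a, haN⟩)
    refine ⟨i, ?_⟩
    have := congrArg (Subtype.val) hi
    simpa [ha₀_def] using this.symm
  have hcomm : ∀ a ∈ N, ∀ b ∈ N, a * b = b * a := by
    intro a ha b hb
    obtain ⟨i, hi⟩ := hgen a ha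
    obtain ⟨j, hj⟩ := hgen b hb
    rw [hi, hj]
    exact ((Commute.refl a₀).zpow_zpow i j).eq
  have hNn : ∀ a ∈ N, a ^ ((n:ℤ)) = 1 := by
    intro a ha
    have h1 : orderOf a ∣ n := hn ▸ Subgroup.orderOf_dvd_natCard N ha
    rw [zpow_natCast]
    exact orderOf_dvd_iff_pow_eq_one.mp h1
  have hdvd1 : ∀ a ∈ N, ∀ t : ℤ, (n:ℤ) ∣ t → a ^ t = 1 := by
    rintro a ha t ⟨s, hs⟩
    rw [hs, zpow_mul, hNn a ha, one_zpow]
  set Mz : ℤ := (p:ℤ) ^ (k-1) * (m:ℤ) with hMz_def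
  have hnMz : (n:ℤ) = Mz * (p:ℤ) := by rw [hcast, hpk_eq, hMz_def]; ring
  have hMzpos : 0 < Mz := by
    have : (0:ℤ) < (m:ℤ) := by exact_mod_cast hm0
    positivity
  have hp0 : ((p:ℤ)) ≠ 0 := by positivity
  set z : G := a₀ ^ Mz with hz_def
  have hzN : z ∈ N := N.zpow_mem ha₀N Mz
  have hzp : z ^ ((p:ℤ)) = 1 := by
    rw [hz_def, ← zpow_mul]
    exact (hzpow_iff _).mpr ⟨1, by rw [hnMz, mul_one]⟩
  have hz1 : z ≠ 1 := by
    intro h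
    have hdvd := (hzpow_iff Mz).mp (by rw [← hz_def]; exact h)
    have hle := Int.le_of_dvd hMzpos hdvd
    have hp2' : (2:ℤ) ≤ (p:ℤ) := by exact_mod_cast hp1
    nlinarith [hnMz]
  have hL1 : ∀ a ∈ N, a ^ ((p:ℤ)) = 1 → ∃ j : ℤ, a = z ^ j := by
    intro a ha hap
    obtain ⟨i, hi⟩ := hgen a ha
    rw [hi, ← zpow_mul] at hap
    have hdvd := (hzpow_iff _).mp hap
    rw [hnMz] at hdvd
    have hMzi : Mz ∣ i := (mul_dvd_mul_iff_right hp0).mp hdvd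
    obtain ⟨j, hj⟩ := hMzi
    exact ⟨j, by rw [hi, hj, zpow_mul, ← hz_def]⟩
  have hLσ : ∀ a ∈ N, a ^ σ = 1 → ∃ j : ℤ, a = z ^ j := by
    intro a ha hσa
    refine hL1 a ha ?_
    calc a ^ ((p:ℤ)) = a ^ (σ * u + (n:ℤ) * ((p:ℤ) * v)) := by rw [hbez]
      _ = (a ^ σ) ^ u * (a ^ ((n:ℤ))) ^ ((p:ℤ) * v) := by
          rw [zpow_add, zpow_mul, zpow_mul]
      _ = 1 := by rw [hσa, hNn a ha, one_zpow, one_zpow, mul_one]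
  have hxpN : x ^ p ∈ N := by
    rw [← hcent]
    refine Subgroup.mem_centralizer_iff.mpr ?_
    intro h hh
    have hhN : h ∈ N := hh
    have h1 : x ^ p * h * (x ^ p)⁻¹ = h := by
      rw [conj_elem_pow N e x hx hhN p]
      rw [show (e ^ p) = (e ^ p - 1) + 1 by ring, zpow_add, hdvd1 h hhN _ hpow, one_mul, zpow_one]
    have h2 : x ^ p * h = h * x ^ p := by
      conv_rhs => rw [← h1]
      group
    exact h2.symm
  have hxe : (x ^ p) ^ e = x ^ p := by
    rw [← hx _ hxpN]; group
  have hxc : (x ^ p) ^ c = 1 := by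
    rw [hc_def, zpow_sub, hxe, zpow_one, mul_inv_cancel]
  have hxfix : (x ^ p) ^ Mz = 1 := by
    have hMzeq : Mz = c * u2 + (n:ℤ) * v2 := hbez2.symm
    calc (x ^ p) ^ Mz = ((x ^ p) ^ c) ^ u2 * ((x ^ p) ^ ((n:ℤ))) ^ v2 := by
          rw [← zpow_mul, ← zpow_mul, ← zpow_add, ← hMzeq]
      _ = 1 := by rw [hxc, hNn _ hxpN, one_zpow, one_zpow, mul_one]
  obtain ⟨i, hxi⟩ := hgen _ hxpN
  have hpi : (p:ℤ) ∣ i := by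
    have h1 : a₀ ^ (i * Mz) = 1 := by
      rw [zpow_mul, ← hxi, hxfix]
    have hdvd := (hzpow_iff _).mp h1
    rw [hnMz, mul_comm i Mz] at hdvd
    exact (mul_dvd_mul_iff_left (ne_of_gt hMzpos)).mp hdvd
  obtain ⟨t, hit⟩ := hpi
  set cx : G := a₀ ^ (-(u * t)) with hcx_def
  have hcxN : cx ∈ N := N.zpow_mem ha₀N _
  have hkey : cx ^ σ * x ^ p = 1 := by
    calc cx ^ σ * x ^ p = a₀ ^ (-(u * t) * σ) * a₀ ^ i := by rw [hcx_def, ← zpow_mul, hxi]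
      _ = a₀ ^ (-(u * t) * σ + i) := (zpow_add a₀ _ _).symm
      _ = 1 := hdvd1 a₀ ha₀N _ ⟨(p:ℤ) * v * t, by rw [hit]; linear_combination (-t) * hbez⟩
  set y : G := cx * x with hy_def
  have hy_conj : ∀ a ∈ N, y * a * y⁻¹ = a ^ e := by
    intro a ha
    calc y * a * y⁻¹ = cx * (x * a * x⁻¹) * cx⁻¹ := by rw [hy_def]; group
      _ = cx * a ^ e * cx⁻¹ := by rw [hx a ha]
      _ = a ^ e := by rw [hcomm cx hcxN (a ^ e) (N.zpow_mem ha e)]; group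
  have hyp : y ^ p = 1 := by
    have h := mul_conj_pow N e x hx hcxN p
    rw [← hσ_def] at h
    rw [hy_def, h, hkey]
  have hxnotN : x ∉ N := by
    intro hxN
    have hbN : a₀ ^ ((m:ℤ)) ∈ N := N.zpow_mem ha₀N _
    have h1 : x * (a₀ ^ ((m:ℤ))) * x⁻¹ = a₀ ^ ((m:ℤ)) := by
      rw [hcomm x hxN _ hbN]; group
    have h2 := hx _ hbN
    have h3 : (a₀ ^ ((m:ℤ))) ^ c = 1 := by
      rw [hc_def, zpow_sub, ← h2, h1, zpow_one, mul_inv_cancel]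
    rw [← zpow_mul] at h3
    have hdvd := (hzpow_iff _).mp h3
    rw [hcast] at hdvd
    apply hnotpk
    obtain ⟨s, hs⟩ := hdvd
    have hm0' : ((m:ℤ)) ≠ 0 := by
      have : (0:ℤ) < (m:ℤ) := by exact_mod_cast hm0
      omega
    refine ⟨s, ?_⟩
    have h4 : (m:ℤ) * c = (m:ℤ) * ((p:ℤ)^k * s) := by linear_combination hs
    exact mul_left_cancel₀ hm0' h4
  have hynotN : y ∉ N := by
    intro hyN
    apply hxnotN
    have hxy : x = cx⁻¹ * y := by rw [hy_def]; group
    rw [hxy]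
    exact N.mul_mem (N.inv_mem hcxN) hyN
  have hzc : z ^ c = 1 := by
    obtain ⟨c1, hc1'⟩ := hpc
    rw [hc1', zpow_mul, hzp, one_zpow]
  have hyz : y * z * y⁻¹ = z := by
    rw [hy_conj z hzN, show e = c + 1 by rw [hc_def]; ring, zpow_add, hzc, one_mul, zpow_one]
  have hCzy : Commute z y := by
    have h : y * z = z * y := by
      conv_rhs => rw [← hyz]
      group
    exact h.symm
  -- the subgroup A = ⟨z, y⟩
  let A : Subgroup G :=
    { carrier := {w | ∃ i j : ℤ, w = z ^ i * y ^ j}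
      one_mem' := ⟨0, 0, by simp⟩
      mul_mem' := by
        rintro a b ⟨i, j, rfl⟩ ⟨i', j', rfl⟩
        refine ⟨i + i', j + j', ?_⟩
        have hc2 : y ^ j * z ^ i' = z ^ i' * y ^ j := (hCzy.zpow_zpow i' j).symm.eq
        calc z ^ i * y ^ j * (z ^ i' * y ^ j') = z ^ i * (y ^ j * z ^ i') * y ^ j' := by group
          _ = z ^ i * (z ^ i' * y ^ j) * y ^ j' := by rw [hc2]
          _ = z ^ (i + i') * y ^ (j + j') := by rw [zpow_add, zpow_add]; group
      inv_mem' := by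
        rintro a ⟨i, j, rfl⟩
        refine ⟨-i, -j, ?_⟩
        have hc2 : z ^ (-i) * y ^ (-j) = y ^ (-j) * z ^ (-i) := (hCzy.zpow_zpow (-i) (-j)).eq
        rw [hc2, zpow_neg, zpow_neg, mul_inv_rev] }
  have hzA : z ∈ A := ⟨1, 0, by simp⟩
  have hyA : y ∈ A := ⟨0, 1, by simp⟩
  have hNnormal : N.Normal := inferInstance
  have hconjz : ∀ g : G, ∃ s : ℤ, g * z * g⁻¹ = z ^ s := by
    intro g
    have h1 : g * z * g⁻¹ ∈ N := hNnormal.conj_mem z hzN g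
    have h2 : (g * z * g⁻¹) ^ ((p:ℤ)) = 1 := by
      rw [conj_zpow, hzp, mul_one, mul_inv_cancel]
    exact hL1 _ h1 h2
  have hconjy : ∀ g : G, ∃ t : ℤ, g * y * g⁻¹ = z ^ t * y := by
    intro g
    have hconjN : ∀ a ∈ N, (g * y * g⁻¹) * a * (g * y * g⁻¹)⁻¹ = a ^ e := by
      intro a ha
      have hmem : g⁻¹ * a * g ∈ N := by
        have := hNnormal.conj_mem a ha g⁻¹
        rwa [inv_inv] at this
      calc (g * y * g⁻¹) * a * (g * y * g⁻¹)⁻¹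
          = g * (y * (g⁻¹ * a * g) * y⁻¹) * g⁻¹ := by group
        _ = g * ((g⁻¹ * a * g) ^ e) * g⁻¹ := by rw [hy_conj _ hmem]
        _ = (g * (g⁻¹ * a * g) * g⁻¹) ^ e := conj_zpow.symm
        _ = a ^ e := by group
    have hdN : y⁻¹ * (g * y * g⁻¹) ∈ N := by
      rw [← hcent]
      refine Subgroup.mem_centralizer_iff.mpr ?_
      intro a ha
      have haN : a ∈ N := ha
      have hda : (y⁻¹ * (g * y * g⁻¹)) * a * (y⁻¹ * (g * y * g⁻¹))⁻¹ = a := by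
        calc (y⁻¹ * (g * y * g⁻¹)) * a * (y⁻¹ * (g * y * g⁻¹))⁻¹
            = y⁻¹ * ((g * y * g⁻¹) * a * (g * y * g⁻¹)⁻¹) * y := by group
          _ = y⁻¹ * (y * a * y⁻¹) * y := by rw [hconjN a haN, ← hy_conj a haN]
          _ = a := by group
      calc a * (y⁻¹ * (g * y * g⁻¹))
          = ((y⁻¹ * (g * y * g⁻¹)) * a * (y⁻¹ * (g * y * g⁻¹))⁻¹) * (y⁻¹ * (g * y * g⁻¹)) := by
            rw [hda]
        _ = (y⁻¹ * (g * y * g⁻¹)) * a := by group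
      -- need : a * d = d * a ; we produced a*d = d*a
    have hde : g * y * g⁻¹ = (y⁻¹ * (g * y * g⁻¹)) ^ e * y := by
      calc g * y * g⁻¹ = y * (y⁻¹ * (g * y * g⁻¹)) * y⁻¹ * y := by group
        _ = (y⁻¹ * (g * y * g⁻¹)) ^ e * y := by rw [hy_conj _ hdN]
    have hhp : (g * y * g⁻¹) ^ p = 1 := by
      rw [conj_pow, hyp, mul_one, mul_inv_cancel]
    have hds : ((y⁻¹ * (g * y * g⁻¹)) ^ e) ^ σ = 1 := by
      have h := mul_conj_pow N e y hy_conj (N.zpow_mem hdN e) p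
      rw [← hσ_def, ← hde, hhp, hyp, mul_one] at h
      exact h.symm
    obtain ⟨t, ht⟩ := hLσ _ (N.zpow_mem hdN e) hds
    exact ⟨t, by rw [hde, ht]⟩
  have hAnormal : A.Normal := by
    constructor
    rintro w ⟨i, j, rfl⟩ g
    obtain ⟨s, hs⟩ := hconjz g
    obtain ⟨t, ht⟩ := hconjy g
    refine ⟨s * i + t * j, j, ?_⟩
    calc g * (z ^ i * y ^ j) * g⁻¹
        = (g * z * g⁻¹) ^ i * (g * y * g⁻¹) ^ j := by rw [conj_zpow, conj_zpow]; group
      _ = (z ^ s) ^ i * (z ^ t * y) ^ j := by rw [hs, ht]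
      _ = (z ^ s) ^ i * ((z ^ t) ^ j * y ^ j) := by rw [(hCzy.zpow_left t).mul_zpow j]
      _ = z ^ (s * i) * (z ^ (t * j) * y ^ j) := by rw [← zpow_mul z s i, ← zpow_mul z t j]
      _ = z ^ (s * i + t * j) * y ^ j := by rw [zpow_add]; group
  have hAab : ∀ a ∈ A, ∀ b ∈ A, a * b = b * a := by
    rintro a ⟨i, j, rfl⟩ b ⟨i', j', rfl⟩
    have c1 : Commute z (z ^ i' * y ^ j') :=
      ((Commute.refl z).zpow_right i').mul_right (hCzy.zpow_right j')
    have c2 : Commute y (z ^ i' * y ^ j') :=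
      (hCzy.symm.zpow_right i').mul_right ((Commute.refl y).zpow_right j')
    exact ((c1.zpow_left i).mul_left (c2.zpow_left j)).eq
  have hAcyc := hRoquette A hAnormal hAab
  haveI := hAcyc
  obtain ⟨w, hw⟩ := IsCyclic.exists_generator (α := ↥A)
  obtain ⟨iw, jw, hwv⟩ := w.2
  have hwp : (w : G) ^ ((p:ℤ)) = 1 := by
    rw [hwv, (hCzy.zpow_zpow iw jw).mul_zpow]
    have h1 : (z ^ iw) ^ ((p:ℤ)) = 1 := by
      rw [← zpow_mul z iw ((p:ℤ)), mul_comm iw, zpow_mul z, hzp, one_zpow]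
    have h2 : (y ^ jw) ^ ((p:ℤ)) = 1 := by
      have hy1 : y ^ ((p:ℤ)) = 1 := by rw [zpow_natCast, hyp]
      rw [← zpow_mul y jw ((p:ℤ)), mul_comm jw, zpow_mul y, hy1, one_zpow]
    rw [h1, h2, mul_one]
  obtain ⟨sz, hsz⟩ := Subgroup.mem_zpowers_iff.mp (hw ⟨z, hzA⟩)
  obtain ⟨sy, hsy⟩ := Subgroup.mem_zpowers_iff.mp (hw ⟨y, hyA⟩)
  have hz_eq : (w:G) ^ sz = z := by
    have := congrArg (Subtype.val) hsz
    simpa using this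
  have hy_eq : (w:G) ^ sy = y := by
    have := congrArg (Subtype.val) hsy
    simpa using this
  have hpsz : ¬ (p:ℤ) ∣ sz := by
    rintro ⟨t', rfl⟩
    apply hz1
    rw [← hz_eq, zpow_mul, hwp, one_zpow]
  obtain ⟨u3, v3, huv3⟩ := (hprime_int.coprime_iff_not_dvd.mpr hpsz).symm
  have hw_eq : (w:G) = z ^ u3 := by
    calc (w:G) = (w:G) ^ (sz * u3 + (p:ℤ) * v3) := by
          rw [show sz * u3 + (p:ℤ) * v3 = 1 from by linear_combination huv3, zpow_one]
      _ = ((w:G) ^ sz) ^ u3 * ((w:G) ^ ((p:ℤ))) ^ v3 := by rw [zpow_add, zpow_mul, zpow_mul]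
      _ = z ^ u3 := by rw [hz_eq, hwp, one_zpow, mul_one]
  apply hynotN
  rw [← hy_eq, hw_eq, ← zpow_mul]
  exact N.zpow_mem hzN _
end

section
/- Let G be a finite group with a cyclic normal subgroup N of order n such that the centralizer of N in G equals N, and assume that the exact power of 2 dividing n is not 4 (i.e., if 4 ∣ n then 8 ∣ n). Suppose that for every prime p and every integer k ≥ 2 with p^k ∣ n and p^(k+1) ∤ n, there is no element x ∈ G such that x a x⁻¹ = a^(1+p^(k−1)) for all a ∈ N with a^(p^k) = 1. Then G has no non-trivial expansive subgroup with trivial normal core in G; that is, every subgroup T of G that is expansive in G and satisfies normalCore_G(T) = 1 must be the trivial subgroup. -/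
open Pointwise

/-- A subgroup `T` of a group `G` is *expansive* if for every `g ∉ N_G(T)`, the normal core,
taken in `N_G(T)`, of the subgroup `(gTg⁻¹ ∩ N_G(T))·T` of `N_G(T)` strictly contains `T`.
Since `T` is normal in `N_G(T)`, the set `(gTg⁻¹ ∩ N_G(T))·T` is the subgroup
`((g • T) ⊓ N_G(T)) ⊔ T`. -/
def Subgroup.IsExpansive {G : Type*} [Group G] (T : Subgroup G) : Prop :=
  ∀ g : G, g ∉ Subgroup.normalizer (T : Set G) →
    T.subgroupOf (Subgroup.normalizer (T : Set G)) <
      (((MulAut.conj g • T ⊓ Subgroup.normalizer (T : Set G)) ⊔ T).subgroupOf (Subgroup.normalizer (T : Set G))).normalCore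

/-- Truncated binomial expansion. -/
lemma binom_trunc_aux (m : ℕ) : ∀ K : ℕ, ∃ t, (1+m)^K = 1 + K*m + t*(m*m) := by
  intro K
  induction K with
  | zero => exact ⟨0, by ring⟩
  | succ K ih =>
    obtain ⟨t, ht⟩ := ih
    refine ⟨t + K + t*m, ?_⟩
    rw [pow_succ, ht]; ring

theorem no_expansive_of_no_alpha_p
    (G : Type*) [Group G] [Finite G] (N : Subgroup G) [N.Normal]
    (hNcyc : IsCyclic N) (n : ℕ) (hn : Nat.card N = n)
    (hcent : Subgroup.centralizer (N : Set G) = N)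
    (h2 : 4 ∣ n → 8 ∣ n)
    (hS : ∀ (p k : ℕ), p.Prime → 2 ≤ k → p ^ k ∣ n → ¬ p ^ (k + 1) ∣ n →
      ¬ ∃ x : G, ∀ a ∈ N, a ^ p ^ k = 1 → x * a * x⁻¹ = a ^ (1 + p ^ (k - 1)))
    (T : Subgroup G) (hT : T.IsExpansive) (hcore : T.normalCore = ⊥) :
    T = ⊥ := by
  by_contra hT0
  -- a generator of the cyclic group N
  obtain ⟨⟨g, hgN⟩, hgen⟩ := hNcyc.exists_generator
  have hgenG : ∀ a : G, a ∈ N → ∃ k : ℤ, g ^ k = a := by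
    intro a ha
    obtain ⟨k, hk⟩ := hgen ⟨a, ha⟩
    exact ⟨k, by simpa using congrArg (Subtype.val) hk⟩
  have hn0 : n ≠ 0 := by
    rw [← hn]
    exact Nat.card_pos.ne'
  have hog : orderOf g = n := by
    have h := Nat.card_zpowers (⟨g, hgN⟩ : N)
    rw [(Subgroup.eq_top_iff' _).mpr hgen, Subgroup.card_top, hn] at h
    have h2' : orderOf g = orderOf (⟨g, hgN⟩ : N) := by
      simpa using (orderOf_injective N.subtype N.subtype_injective ⟨g, hgN⟩).symm
    rw [h2']
    exact h.symm
  -- conjugation acts on N by power maps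
  have hconjpow : ∀ b : G, ∃ j : ℤ, ∀ a ∈ N, b * a * b⁻¹ = a ^ j := by
    intro b
    obtain ⟨j, hj⟩ := hgenG (b * g * b⁻¹) (Subgroup.Normal.conj_mem ‹N.Normal› g hgN b)
    refine ⟨j, fun a ha => ?_⟩
    obtain ⟨k, hk⟩ := hgenG a ha
    rw [← hk, ← zpow_mul, mul_comm k j, zpow_mul, hj, conj_zpow]
  -- T ⊓ N = ⊥
  have hTN : T ⊓ N = ⊥ := by
    rw [eq_bot_iff, ← hcore]
    intro a ha
    obtain ⟨haT, haN⟩ := Subgroup.mem_inf.mp ha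
    intro b
    obtain ⟨j, hj⟩ := hconjpow b
    rw [hj a haN]
    exact T.zpow_mem haT j
  have hTNe : ∀ t : G, t ∈ T → t ∈ N → t = 1 := by
    intro t ht htN
    have : t ∈ T ⊓ N := Subgroup.mem_inf.mpr ⟨ht, htN⟩
    rwa [hTN, Subgroup.mem_bot] at this
  -- elements of N in the normalizer of T centralize T
  have hNM : ∀ m : G, m ∈ N → m ∈ Subgroup.normalizer (T : Set G) → ∀ t ∈ T, m * t * m⁻¹ = t := by
    intro m hmN hmM t ht
    have h1 : m * t * m⁻¹ ∈ T := (Subgroup.mem_normalizer_iff.mp hmM t).mp ht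
    have h2' : t⁻¹ * (m * t * m⁻¹) ∈ N := by
      have h3 := Subgroup.Normal.conj_mem ‹N.Normal› m hmN t⁻¹
      have h4 := N.mul_mem h3 (N.inv_mem hmN)
      simpa [mul_assoc] using h4
    have h5 : t⁻¹ * (m * t * m⁻¹) ∈ T := T.mul_mem (T.inv_mem ht) h1
    have h6 := hTNe _ h5 h2'
    have h7 : t * (t⁻¹ * (m * t * m⁻¹)) = t * 1 := by rw [h6]
    simpa [mul_assoc] using h7
  -- g is not in the normalizer of T
  have hgM : g ∉ Subgroup.normalizer (T : Set G) := by
    intro hgM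
    apply hT0
    have hsub : T ≤ N := by
      rw [← hcent]
      intro t ht
      rw [Subgroup.mem_centralizer_iff]
      intro a ha
      obtain ⟨k, hk⟩ := hgenG a ha
      have hcomm : g * t * g⁻¹ = t := hNM g hgN hgM t ht
      have hgt : Commute g t := by
        unfold Commute SemiconjBy
        calc g * t = (g * t * g⁻¹) * g := by group
        _ = t * g := by rw [hcomm]
      rw [← hk]
      exact (hgt.zpow_left k).eq
    have hle : T ≤ T ⊓ N := le_inf le_rfl hsub
    rw [hTN] at hle
    exact eq_bot_iff.mpr hle
  -- extract an element from expansiveness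
  have hlt := hT g hgM
  obtain ⟨x, hxcore, hxT⟩ := SetLike.exists_of_lt hlt
  have hTM : T ≤ Subgroup.normalizer (T : Set G) := Subgroup.le_normalizer
  have hxS : x ∈ ((MulAut.conj g • T ⊓ Subgroup.normalizer (T : Set G)).subgroupOf (Subgroup.normalizer (T : Set G))) ⊔
      (T.subgroupOf (Subgroup.normalizer (T : Set G))) := by
    have h8 := Subgroup.normalCore_le _ hxcore
    rwa [Subgroup.subgroupOf_sup inf_le_right hTM] at h8
  have hxmem : x ∈ ((MulAut.conj g • T ⊓ Subgroup.normalizer (T : Set G)).subgroupOf (Subgroup.normalizer (T : Set G)) : Set (Subgroup.normalizer (T : Set G)))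
      * (T.subgroupOf (Subgroup.normalizer (T : Set G)) : Set (Subgroup.normalizer (T : Set G))) := by
    rw [← Subgroup.mul_normal]
    exact hxS
  obtain ⟨b, hb, t₀, ht₀, hbt⟩ := hxmem
  have ht₀T : (t₀ : G) ∈ T := Subgroup.mem_subgroupOf.mp ht₀
  have hsT : g⁻¹ * (b : G) * g ∈ T := by
    have h9 := (Subgroup.mem_inf.mp (Subgroup.mem_subgroupOf.mp hb)).1
    rw [Subgroup.mem_smul_pointwise_iff_exists] at h9
    obtain ⟨s', hs', hgs'⟩ := h9
    have h9' : g * s' * g⁻¹ = (b : G) := by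
      simpa [MulAut.smul_def] using hgs'
    have : g⁻¹ * (b : G) * g = s' := by rw [← h9']; group
    rw [this]
    exact hs'
  set s : G := g⁻¹ * (b : G) * g with hs_def
  have hbs : (b : G) = g * s * g⁻¹ := by rw [hs_def]; group
  have hxG : (x : G) = (b : G) * (t₀ : G) := by
    rw [← hbt]; rfl
  set c : G := (s * (t₀ : G))⁻¹ * (x : G) with hc_def
  have hxc : (x : G) = (s * (t₀ : G)) * c := by rw [hc_def]; group
  have hcN : c ∈ N := by
    have h10 : c = (t₀ : G)⁻¹ * (s⁻¹ * g * s * g⁻¹) * (t₀ : G) := by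
      rw [hc_def, hxG, hbs]; group
    rw [h10]
    have h11 : s⁻¹ * g * s * g⁻¹ ∈ N := by
      have h11a := Subgroup.Normal.conj_mem ‹N.Normal› g hgN s⁻¹
      rw [inv_inv] at h11a
      exact N.mul_mem h11a (N.inv_mem hgN)
    have := Subgroup.Normal.conj_mem ‹N.Normal› _ h11 (t₀ : G)⁻¹
    simpa [mul_assoc] using this
  have hcM : c ∈ Subgroup.normalizer (T : Set G) := by
    rw [hc_def]
    exact Subgroup.mul_mem _ (Subgroup.inv_mem _ (Subgroup.mul_mem _ (hTM hsT) t₀.2)) x.2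
  have hc1 : c ≠ 1 := by
    intro h
    apply hxT
    rw [Subgroup.mem_subgroupOf]
    rw [hxc, h, mul_one]
    exact T.mul_mem hsT ht₀T
  have hccomm : ∀ t ∈ T, c * t * c⁻¹ = t := hNM c hcN hcM
  -- c = s⁻¹ g s g⁻¹
  have hd : s⁻¹ * g * s * g⁻¹ = c := by
    have h10 : c = (t₀ : G)⁻¹ * (s⁻¹ * g * s * g⁻¹) * (t₀ : G) := by
      rw [hc_def, hxG, hbs]; group
    have h12 : c * (t₀ : G) * c⁻¹ = (t₀ : G) := hccomm _ ht₀T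
    have h13 : c * (t₀ : G) = (t₀ : G) * c := by
      calc c * (t₀ : G) = (c * (t₀ : G) * c⁻¹) * c := by group
      _ = (t₀ : G) * c := by rw [h12]
    calc s⁻¹ * g * s * g⁻¹ = (t₀ : G) * ((t₀ : G)⁻¹ * (s⁻¹ * g * s * g⁻¹) * (t₀ : G)) * (t₀ : G)⁻¹ := by
          group
    _ = (t₀ : G) * c * (t₀ : G)⁻¹ := by rw [← h10]
    _ = c := by rw [← h13]; group
  have hgs : s⁻¹ * g * s = c * g := by
    calc s⁻¹ * g * s = (s⁻¹ * g * s * g⁻¹) * g := by group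
    _ = c * g := by rw [hd]
  -- the exponent m
  obtain ⟨mz, hmz⟩ := hgenG c hcN
  set m : ℕ := (mz % (n : ℤ)).toNat with hm_def
  have hm : g ^ m = c := by
    have h9 : (0 : ℤ) ≤ mz % (n : ℤ) :=
      Int.emod_nonneg mz (by exact_mod_cast hn0)
    rw [← zpow_natCast, hm_def, Int.toNat_of_nonneg h9, ← hog, zpow_mod_orderOf, hmz]
  have hndvd : ¬ n ∣ m := by
    intro hdvd
    apply hc1
    rw [← hm]
    exact orderOf_dvd_iff_pow_eq_one.mp (hog ▸ hdvd)
  have hm0 : m ≠ 0 := fun h => hndvd (h ▸ dvd_zero n)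
  -- conjugation by s⁻¹ raises elements of N to the power 1 + m
  have hconj : ∀ a ∈ N, s⁻¹ * a * s = a ^ (1 + m) := by
    intro a ha
    obtain ⟨k, hk⟩ := hgenG a ha
    rw [← hk]
    have e1 : s⁻¹ * g ^ k * s = (s⁻¹ * g * s) ^ k := by
      have := conj_zpow (i := k) (a := s⁻¹) (b := g)
      simpa [inv_inv] using this.symm
    rw [e1, hgs, ← hm, ← pow_succ]
    have e2 : (g ^ (m + 1)) ^ (k : ℤ) = (g ^ (k : ℤ)) ^ (m + 1) := by
      rw [← zpow_natCast g (m + 1), ← zpow_mul, mul_comm ((m + 1 : ℕ) : ℤ) k, zpow_mul,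
        zpow_natCast]
    rw [e2, Nat.add_comm m 1]
  -- c is fixed by conjugation by s⁻¹, so c^m = 1 and n ∣ m * m
  have hnmm : n ∣ m * m := by
    have h14 : c * s * c⁻¹ = s := hccomm s hsT
    have h15 : s⁻¹ * c * s = c := by
      have hcs : c * s = s * c := by
        calc c * s = (c * s * c⁻¹) * c := by group
        _ = s * c := by rw [h14]
      calc s⁻¹ * c * s = s⁻¹ * (c * s) := by group
      _ = s⁻¹ * (s * c) := by rw [hcs]
      _ = c := by group
    have h16 : c ^ (1 + m) = c := by rw [← hconj c hcN, h15]
    have h17 : c ^ m = 1 := by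
      rw [pow_add, pow_one] at h16
      exact mul_left_cancel (a := c) (by rw [mul_one]; exact h16)
    rw [← hog]
    apply orderOf_dvd_iff_pow_eq_one.mpr
    rw [pow_mul, hm, h17]
  -- choose a prime p with v_p(m) < v_p(n)
  have hnotle : ¬ n.factorization ≤ m.factorization := fun hle =>
    hndvd ((Nat.factorization_le_iff_dvd hn0 hm0).mp hle)
  rw [Finsupp.le_def] at hnotle
  push_neg at hnotle
  obtain ⟨p, hpe⟩ := hnotle
  set a : ℕ := n.factorization p with ha_def
  set e : ℕ := m.factorization p with he_def
  have hea : e < a := hpe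
  have hpp : p.Prime := by
    apply Nat.prime_of_mem_primeFactors (n := n)
    rw [← Nat.support_factorization]
    exact Finsupp.mem_support_iff.mpr (by omega)
  have h2e : a ≤ e + e := by
    have h18 := (Nat.factorization_le_iff_dvd hn0 (Nat.mul_ne_zero hm0 hm0)).mpr hnmm
    have h19 := Finsupp.le_def.mp h18 p
    rwa [Nat.factorization_mul hm0 hm0, Finsupp.add_apply] at h19
  have ha2 : 2 ≤ a := by omega
  -- solve m * K ≡ p^(a-1) [MOD p^a]
  set v : ℕ := m / p ^ e with hv_def
  have hv : p ^ e * v = m := Nat.ordProj_mul_ordCompl_eq_self m p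
  have hvcop : Nat.Coprime v (p ^ (a - e)) :=
    ((Nat.coprime_ordCompl hpp hm0).symm).pow_right _
  have hgt1 : 1 < p ^ (a - e) := Nat.one_lt_pow (by omega) hpp.one_lt
  obtain ⟨w, -, hw⟩ := Nat.exists_mul_mod_eq_one_of_coprime hvcop hgt1
  have hvw : v * w ≡ 1 [MOD p ^ (a - e)] := by
    show v * w % _ = 1 % _
    rw [hw, Nat.mod_eq_of_lt hgt1]
  set K : ℕ := w * p ^ (a - 1 - e) with hK_def
  have hK : m * K ≡ p ^ (a - 1) [MOD p ^ a] := by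
    have h10 : m * K = (v * w) * p ^ (a - 1) := by
      have hexp : e + (a - 1 - e) = a - 1 := by omega
      calc m * K = p ^ e * v * (w * p ^ (a - 1 - e)) := by rw [hv]
      _ = v * w * (p ^ e * p ^ (a - 1 - e)) := by ring
      _ = v * w * p ^ (a - 1) := by rw [← pow_add, hexp]
    have h11 : (v * w) * p ^ (a - 1) ≡ 1 * p ^ (a - 1) [MOD p ^ (a - e) * p ^ (a - 1)] :=
      hvw.mul_right' _
    have h12 : p ^ a ∣ p ^ (a - e) * p ^ (a - 1) := by
      rw [← pow_add]
      exact pow_dvd_pow p (by omega)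
    rw [h10]
    simpa using h11.of_dvd h12
  -- iterated conjugation
  have hconjK : ∀ (Kk : ℕ) (a' : G), a' ∈ N →
      (s ^ Kk)⁻¹ * a' * s ^ Kk = a' ^ ((1 + m) ^ Kk) := by
    intro Kk
    induction Kk with
    | zero => intro a' _; simp
    | succ Kk ih =>
      intro a' ha'
      have h13 : (s ^ (Kk + 1))⁻¹ * a' * s ^ (Kk + 1) =
          s⁻¹ * ((s ^ Kk)⁻¹ * a' * s ^ Kk) * s := by
        rw [pow_succ]; group
      rw [h13, ih a' ha', hconj _ (N.pow_mem ha' _), ← pow_mul, ← pow_succ]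
  -- final contradiction with hS
  refine hS p a hpp ha2 (Nat.ordProj_dvd n p) (Nat.pow_succ_factorization_not_dvd hn0 hpp)
    ⟨(s ^ K)⁻¹, ?_⟩
  intro a' ha' hord
  rw [inv_inv, hconjK K a' ha']
  have horddvd : orderOf a' ∣ p ^ a := orderOf_dvd_iff_pow_eq_one.mpr hord
  obtain ⟨t, ht'⟩ := binom_trunc_aux m K
  have h14 : (1 + m) ^ K ≡ 1 + K * m [MOD p ^ a] := by
    have h20 : (1 + m) ^ K ≡ 1 + K * m [MOD m * m] := by
      rw [ht']
      exact ((Nat.modEq_iff_dvd' (Nat.le_add_right _ _)).mpr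
        ⟨t, by rw [Nat.add_sub_cancel_left, mul_comm]⟩).symm
    exact h20.of_dvd (dvd_trans (Nat.ordProj_dvd n p) hnmm)
  have h15 : (1 + m) ^ K ≡ 1 + p ^ (a - 1) [MOD p ^ a] := by
    refine h14.trans (Nat.ModEq.add_left 1 ?_)
    rwa [mul_comm] at hK
  exact pow_eq_pow_iff_modEq.mpr (h15.of_dvd horddvd)
end

section
/- Let G be a finite group with a cyclic normal subgroup N of order n such that the centralizer of N in G equals N, and assume that the exact power of 2 dividing n is not 4 (i.e., if 4 ∣ n then 8 ∣ n). If every subgroup T of G that is expansive in G and has trivial normal core in G is trivial, then G is Roquette. -/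
open Pointwise

open Finset in
private lemma aux_cyclic {H : Type*} [CommGroup H] [DecidableEq H] [Fintype H]
    (h : ∀ p : ℕ, p.Prime → #{a : H | a ^ p = 1} ≤ p) : IsCyclic H := by
  have key : ∀ n : ℕ, 0 < n → #{a : H | a ^ n = 1} ≤ n := by
    intro n
    induction n using Nat.strong_induction_on with
    | _ n IH =>
      intro hn
      rcases eq_or_lt_of_le (show 1 ≤ n from hn) with h1 | h1
      · have hn1 : n = 1 := h1.symm
        subst hn1
        have hsub : ({a : H | a ^ 1 = 1} : Finset H) ⊆ {1} := by
          intro a ha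
          rw [mem_filter, pow_one] at ha
          simpa using ha.2
        simpa using Finset.card_le_card hsub
      · set p := n.minFac with hp_def
        have hp : p.Prime := Nat.minFac_prime (by omega)
        have hpn : p ∣ n := Nat.minFac_dvd n
        set m := n / p with hm_def
        have hmn : p * m = n := Nat.mul_div_cancel' hpn
        have hm0 : 0 < m := Nat.div_pos (Nat.le_of_dvd hn hpn) hp.pos
        have h2m : 2 * m ≤ n := hmn ▸ Nat.mul_le_mul_right m hp.two_le
        have hmlt : m < n := by omega
        have IHm := IH m hmlt hm0
        have hmaps : ∀ a ∈ ({a : H | a ^ n = 1} : Finset H),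
            a ^ p ∈ ({b : H | b ^ m = 1} : Finset H) := by
          intro a ha
          rw [mem_filter] at ha ⊢
          exact ⟨mem_univ _, by rw [← pow_mul, hmn, ha.2]⟩
        have hfib : ∀ b ∈ ({b : H | b ^ m = 1} : Finset H),
            #({a ∈ ({a : H | a ^ n = 1} : Finset H) | a ^ p = b}) ≤ p := by
          intro b _
          by_cases hne : ({a ∈ ({a : H | a ^ n = 1} : Finset H) | a ^ p = b}).Nonempty
          · obtain ⟨a0, ha0⟩ := hne
            have ha0' : a0 ^ p = b := (mem_filter.mp ha0).2
            have := Finset.card_le_card_of_injOn (fun a => a * a0⁻¹)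
              (s := {a ∈ ({a : H | a ^ n = 1} : Finset H) | a ^ p = b})
              (t := {c : H | c ^ p = 1})
              (fun a ha => by
                rw [Finset.mem_coe, mem_filter] at ha ⊢
                refine ⟨mem_univ _, ?_⟩
                rw [mul_pow, inv_pow, ha.2, ha0', mul_inv_cancel])
              (fun a _ b _ hab => by exact mul_right_cancel hab)
            exact this.trans (h p hp)
          · rw [Finset.not_nonempty_iff_eq_empty.mp hne]
            simp [hp.pos.le]
        calc #({a : H | a ^ n = 1} : Finset H)
            ≤ p * #({b : H | b ^ m = 1} : Finset H) :=
              Finset.card_le_mul_card_image_of_maps_to hmaps p hfib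
          _ ≤ p * m := Nat.mul_le_mul_left p IHm
          _ = n := hmn
  exact isCyclic_of_card_pow_eq_one_le key

theorem roquette_of_no_expansive
    (G : Type*) [Group G] [Finite G] (N : Subgroup G) [N.Normal]
    (hNcyc : IsCyclic N) (n : ℕ) (hn : Nat.card N = n)
    (hcent : Subgroup.centralizer (N : Set G) = N)
    (h2 : 4 ∣ n → 8 ∣ n)
    (hexp : ∀ T : Subgroup G, T.IsExpansive → T.normalCore = ⊥ → T = ⊥) :
    ∀ A : Subgroup G, A.Normal → (∀ x ∈ A, ∀ y ∈ A, x * y = y * x) → IsCyclic A := by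
  classical
  intro A hA hAcomm
  by_contra hAnc
  letI : CommGroup ↥A :=
    { (inferInstance : Group ↥A) with
      mul_comm := fun a b => Subtype.ext (hAcomm a a.2 b b.2) }
  haveI : Fintype G := Fintype.ofFinite G
  haveI := hNcyc
  -- Step 1 : all commutators lie in N
  obtain ⟨y, hy⟩ := hNcyc.exists_generator
  have key : ∀ u : G, ∃ k : ℤ, ∀ m : ℤ, u * (y : G) ^ m * u⁻¹ = (y : G) ^ (k * m) := by
    intro u
    have h1 : u * (y : G) * u⁻¹ ∈ N := ‹N.Normal›.conj_mem _ y.2 u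
    obtain ⟨k, hk⟩ := Subgroup.mem_zpowers_iff.mp (hy ⟨_, h1⟩)
    have hk' : u * (y : G) * u⁻¹ = (y : G) ^ k := by
      have := congrArg (Subtype.val) hk
      push_cast at this
      exact this.symm
    refine ⟨k, fun m => ?_⟩
    calc u * (y : G) ^ m * u⁻¹ = (u * (y : G) * u⁻¹) ^ m := by rw [conj_zpow]
      _ = ((y : G) ^ k) ^ m := by rw [hk']
      _ = (y : G) ^ (k * m) := by rw [← zpow_mul]
  have hcomm' : ∀ g w : G, g⁻¹ * w⁻¹ * g * w ∈ N := by
    intro g w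
    obtain ⟨kg, hkg⟩ := key g
    obtain ⟨kw, hkw⟩ := key w
    have heq : ∀ m : ℤ, (g * w) * (y : G) ^ m * (g * w)⁻¹
        = (w * g) * (y : G) ^ m * (w * g)⁻¹ := by
      intro m
      have e1 : (g * w) * (y : G) ^ m * (g * w)⁻¹ = g * (w * (y : G) ^ m * w⁻¹) * g⁻¹ := by
        group
      have e2 : (w * g) * (y : G) ^ m * (w * g)⁻¹ = w * (g * (y : G) ^ m * g⁻¹) * w⁻¹ := by
        group
      rw [e1, e2, hkw, hkg, hkg, hkw]
      congr 1
      ring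
    rw [← hcent]
    rw [Subgroup.mem_centralizer_iff]
    intro h hh
    obtain ⟨m, hm⟩ := Subgroup.mem_zpowers_iff.mp (hy ⟨h, hh⟩)
    have hm' : (y : G) ^ m = h := by
      have := congrArg (Subtype.val) hm
      push_cast at this
      exact this
    have e := heq m
    rw [hm'] at e
    calc h * (g⁻¹ * w⁻¹ * g * w)
        = (w * g)⁻¹ * ((w * g) * h * (w * g)⁻¹) * (g * w) := by group
      _ = (w * g)⁻¹ * ((g * w) * h * (g * w)⁻¹) * (g * w) := by rw [← e]
      _ = (g⁻¹ * w⁻¹ * g * w) * h := by group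
  have hcommN : ∀ g w : G, g * w * g⁻¹ * w⁻¹ ∈ N := by
    intro g w
    have := hcomm' g⁻¹ w⁻¹
    simpa using this
  -- Step 2 : find prime p and x ∈ A with x^p = 1, x ∉ N
  have hstep2 : ∃ p : ℕ, p.Prime ∧ ∃ x : G, x ∈ A ∧ x ^ p = 1 ∧ x ∉ N := by
    by_contra hcon
    push_neg at hcon
    apply hAnc
    haveI : Fintype ↥N := Fintype.ofFinite _
    haveI : Fintype ↥A := Fintype.ofFinite _
    apply aux_cyclic
    intro p hp
    have hNb : (Finset.univ.filter fun b : ↥N => b ^ p = 1).card ≤ p :=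
      IsCyclic.card_pow_eq_one_le hp.pos
    have hinj : Function.Injective
        (fun a : {a : ↥A // a ^ p = 1} =>
          (⟨⟨(a.1 : G),
              hcon p hp (a.1 : G) a.1.2
                (by exact_mod_cast congrArg Subtype.val a.2)⟩,
            Subtype.ext (by
              push_cast
              exact_mod_cast congrArg Subtype.val a.2)⟩ :
            {b : ↥N // b ^ p = 1})) := by
      intro a b hab
      apply Subtype.ext
      apply Subtype.ext
      exact congrArg (fun t : {b : ↥N // b ^ p = 1} => ((t.1 : G))) hab
    calc (Finset.univ.filter fun a : ↥A => a ^ p = 1).card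
        = Fintype.card {a : ↥A // a ^ p = 1} := (Fintype.card_subtype _).symm
      _ ≤ Fintype.card {b : ↥N // b ^ p = 1} := Fintype.card_le_of_injective _ hinj
      _ = (Finset.univ.filter fun b : ↥N => b ^ p = 1).card := Fintype.card_subtype _
      _ ≤ p := hNb
  obtain ⟨p, hp, x, hxA, hxp, hxN⟩ := hstep2
  haveI : Fact p.Prime := ⟨hp⟩
  have hx1 : x ≠ 1 := fun h => hxN (h ▸ N.one_mem)
  set T := Subgroup.zpowers x with hT_def
  -- if a nontrivial element of T is known, x is a power of it
  have hxmem : ∀ u : G, u ∈ T → u ≠ 1 → x ∈ Subgroup.zpowers u := by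
    intro u hu hu1
    obtain ⟨k, hk⟩ := Subgroup.mem_zpowers_iff.mp hu
    have hpk : ¬((p : ℤ) ∣ k) := by
      rintro ⟨t, rfl⟩
      apply hu1
      rw [← hk, zpow_mul, zpow_natCast, hxp, one_zpow]
    have hcop : IsCoprime ((p : ℤ)) k :=
      (Prime.coprime_iff_not_dvd (Nat.prime_iff_prime_int.mp hp)).mpr hpk
    obtain ⟨c, d, hcd⟩ := hcop
    have hxu : x = u ^ d := by
      calc x = x ^ (c * (p : ℤ) + d * k) := by rw [hcd, zpow_one]
        _ = (x ^ (p : ℤ)) ^ c * (x ^ k) ^ d := by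
            rw [zpow_add, mul_comm c (p : ℤ), zpow_mul, mul_comm d k, zpow_mul]
        _ = u ^ d := by
            rw [hk, zpow_natCast, hxp, one_zpow, one_mul]
    rw [hxu]
    exact Subgroup.zpow_mem _ (Subgroup.mem_zpowers u) d
  have hTN : ∀ u : G, u ∈ T → u ∈ N → u = 1 := by
    intro u hu huN
    by_contra h1
    exact hxN (Subgroup.zpowers_le.mpr huN (hxmem u hu h1))
  have hnormalizer : ∀ c : G, c * x = x * c → c ∈ Subgroup.normalizer (T : Set G) := by
    intro c hc
    have hcx : c * x * c⁻¹ = x := by rw [hc, mul_assoc, mul_inv_cancel, mul_one]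
    have hcx' : c⁻¹ * x * c = x := by
      rw [mul_assoc, ← hc, ← mul_assoc, inv_mul_cancel, one_mul]
    rw [Subgroup.mem_normalizer_iff]
    intro h
    constructor
    · intro hh
      obtain ⟨k, hk⟩ := Subgroup.mem_zpowers_iff.mp hh
      rw [← hk]
      have : c * x ^ k * c⁻¹ = x ^ k := by rw [← conj_zpow, hcx]
      rw [this]
      exact Subgroup.zpow_mem _ (Subgroup.mem_zpowers x) k
    · intro hh
      obtain ⟨k, hk⟩ := Subgroup.mem_zpowers_iff.mp hh
      have : h = c⁻¹ * x ^ k * c := by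
        rw [hk]; group
      rw [this]
      have e : c⁻¹ * x ^ k * c = x ^ k := by
        have := conj_zpow (i := k) (a := c⁻¹) (b := x)
        rw [inv_inv] at this
        rw [← this, hcx']
      rw [e]
      exact Subgroup.zpow_mem _ (Subgroup.mem_zpowers x) k
  -- the subgroup Ω of p-torsion elements of A
  set Ω : Subgroup G :=
    { carrier := {a : G | a ∈ A ∧ a ^ p = 1}
      one_mem' := ⟨A.one_mem, one_pow p⟩
      mul_mem' := fun {a b} ha hb =>
        ⟨A.mul_mem ha.1 hb.1, by
          rw [Commute.mul_pow (hAcomm a ha.1 b hb.1), ha.2, hb.2, one_mul]⟩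
      inv_mem' := fun {a} ha =>
        ⟨A.inv_mem ha.1, by rw [inv_pow, ha.2, inv_one]⟩ } with hΩ_def
  have hΩmem : ∀ a : G, a ∈ Ω ↔ a ∈ A ∧ a ^ p = 1 := fun a => Iff.rfl
  have hΩconj : ∀ (u a : G), a ∈ Ω → u * a * u⁻¹ ∈ Ω := by
    intro u a ha
    exact ⟨hA.conj_mem a ((hΩmem a).mp ha).1 u, by
      rw [conj_pow, ((hΩmem a).mp ha).2, mul_one, mul_inv_cancel]⟩
  have hxΩ : x ∈ Ω := (hΩmem x).mpr ⟨hxA, hxp⟩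
  -- T has trivial normal core
  have hcore : T.normalCore = ⊥ := by
    by_contra hC
    obtain ⟨⟨c, hcC⟩, hc1⟩ := Subgroup.ne_bot_iff_exists_ne_one.mp hC
    have hc1' : c ≠ 1 := fun h => hc1 (Subtype.ext h)
    have hcT : c ∈ T := T.normalCore_le hcC
    have hxC : x ∈ T.normalCore := Subgroup.zpowers_le.mpr hcC (hxmem c hcT hc1')
    have hxcent : x ∈ Subgroup.centralizer (N : Set G) := by
      rw [Subgroup.mem_centralizer_iff]
      intro h hh
      have h1 : h * x * h⁻¹ ∈ T :=
        T.normalCore_le ((Subgroup.normalCore_normal T).conj_mem x hxC h)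
      have h2 : h * x * h⁻¹ * x⁻¹ ∈ N := hcommN h x
      have h3 : h * x * h⁻¹ * x⁻¹ ∈ T := T.mul_mem h1 (T.inv_mem (Subgroup.mem_zpowers x))
      have h4 : h * x * h⁻¹ * x⁻¹ = 1 := hTN _ h3 h2
      have h5 : h * x * h⁻¹ = x := by
        rwa [mul_inv_eq_one] at h4
      calc h * x = (h * x * h⁻¹) * h := by group
        _ = x * h := by rw [h5]
    exact hxN (hcent ▸ hxcent)
  -- T is expansive
  have hTexp : T.IsExpansive := by
    intro g hg
    set K := ((MulAut.conj g • T ⊓ Subgroup.normalizer (T : Set G)) ⊔ T) with hK_def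
    set z := g * x * g⁻¹ * x⁻¹ with hz_def
    have hzN : z ∈ N := hcommN g x
    have hzΩ : z ∈ Ω := Ω.mul_mem (hΩconj g x hxΩ) (Ω.inv_mem hxΩ)
    have hzA : z ∈ A := ((hΩmem z).mp hzΩ).1
    have hzp : z ^ p = 1 := ((hΩmem z).mp hzΩ).2
    have hz1 : z ≠ 1 := by
      intro h
      apply hg
      have hgx : g * x * g⁻¹ = x := by
        have : g * x * g⁻¹ * x⁻¹ = 1 := h
        rwa [mul_inv_eq_one] at this
      apply hnormalizer g
      calc g * x = (g * x * g⁻¹) * g := by group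
        _ = x * g := by rw [hgx]
    have hzH : z ∈ Subgroup.normalizer (T : Set G) := hnormalizer z (hAcomm z hzA x hxA)
    have hgxgA : g * x * g⁻¹ ∈ A := hA.conj_mem x hxA g
    have hgxgH : g * x * g⁻¹ ∈ Subgroup.normalizer (T : Set G) :=
      hnormalizer _ (hAcomm _ hgxgA x hxA)
    have hgxgT : g * x * g⁻¹ ∈ MulAut.conj g • T := by
      have h1 := Subgroup.smul_mem_pointwise_smul x (MulAut.conj g) T (Subgroup.mem_zpowers x)
      simpa [MulAut.smul_def] using h1
    have hgxgK : g * x * g⁻¹ ∈ K :=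
      Subgroup.mem_sup_left (Subgroup.mem_inf.mpr ⟨hgxgT, hgxgH⟩)
    have hxK : x ∈ K := Subgroup.mem_sup_right (Subgroup.mem_zpowers x)
    have hzK : z ∈ K := K.mul_mem hgxgK (K.inv_mem hxK)
    -- Ω ⊓ N = zpowers z
    have hordz : orderOf z = p := orderOf_eq_prime hzp hz1
    have hZle : Subgroup.zpowers z ≤ Ω ⊓ N :=
      Subgroup.zpowers_le.mpr (Subgroup.mem_inf.mpr ⟨hzΩ, hzN⟩)
    haveI : Fintype ↥N := Fintype.ofFinite _
    have hcardZ : Nat.card ↥(Ω ⊓ N) ≤ p := by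
      have hNb : (Finset.univ.filter fun b : ↥N => b ^ p = 1).card ≤ p :=
        IsCyclic.card_pow_eq_one_le hp.pos
      have hinj : Function.Injective
          (fun w : ↥(Ω ⊓ N) =>
            (⟨⟨(w : G), (Subgroup.mem_inf.mp w.2).2⟩,
              Subtype.ext (by
                push_cast
                exact ((hΩmem (w : G)).mp (Subgroup.mem_inf.mp w.2).1).2)⟩ :
              {b : ↥N // b ^ p = 1})) := by
        intro a b hab
        apply Subtype.ext
        exact congrArg (fun t : {b : ↥N // b ^ p = 1} => ((t.1 : G))) hab
      calc Nat.card ↥(Ω ⊓ N) = Fintype.card ↥(Ω ⊓ N) := Nat.card_eq_fintype_card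
        _ ≤ Fintype.card {b : ↥N // b ^ p = 1} := Fintype.card_le_of_injective _ hinj
        _ = (Finset.univ.filter fun b : ↥N => b ^ p = 1).card := Fintype.card_subtype _
        _ ≤ p := hNb
    have hZeq : Subgroup.zpowers z = Ω ⊓ N := by
      apply Subgroup.eq_of_le_of_card_ge hZle
      rw [Nat.card_zpowers, hordz]
      exact hcardZ
    -- conclude the strict inequality
    rw [SetLike.lt_iff_le_and_exists]
    constructor
    · intro t ht
      have ht' : (t : G) ∈ T := ht
      intro b
      rw [Subgroup.mem_subgroupOf]
      have hb : (b : G) ∈ Subgroup.normalizer (T : Set G) := b.2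
      have : (b : G) * (t : G) * (b : G)⁻¹ ∈ T :=
        (Subgroup.mem_normalizer_iff.mp hb (t : G)).mp ht'
      have hco : ((b * t * b⁻¹ : ↥(Subgroup.normalizer (T : Set G))) : G) = (b : G) * (t : G) * (b : G)⁻¹ := by
        push_cast; rfl
      rw [hco]
      exact Subgroup.mem_sup_right this
    · refine ⟨⟨z, hzH⟩, ?_, ?_⟩
      · intro b
        rw [Subgroup.mem_subgroupOf]
        have hco : ((b * ⟨z, hzH⟩ * b⁻¹ : ↥(Subgroup.normalizer (T : Set G))) : G) = (b : G) * z * (b : G)⁻¹ := by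
          push_cast; rfl
        rw [hco]
        have h1 : (b : G) * z * (b : G)⁻¹ ∈ Ω ⊓ N :=
          Subgroup.mem_inf.mpr
            ⟨hΩconj _ z hzΩ, ‹N.Normal›.conj_mem z hzN (b : G)⟩
        rw [← hZeq] at h1
        exact Subgroup.zpowers_le.mpr hzK h1
      · intro hmem
        rw [Subgroup.mem_subgroupOf] at hmem
        exact hz1 (hTN z hmem hzN)
  -- apply the hypothesis
  have hTbot : T = ⊥ := hexp T hTexp hcore
  have : x ∈ (⊥ : Subgroup G) := hTbot ▸ Subgroup.mem_zpowers x
  exact hx1 (Subgroup.mem_bot.mp this)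
end

section
/- Let N and H be groups, φ : H → Aut(N) a homomorphism, and G = N ⋊_φ H the semidirect product, with canonical injections inl : N → G and inr : H → G. Let S be a subgroup of H and let S' = inr(S) be its image in G. Then for all a ∈ N and h ∈ H, the element inl(a)·inr(h) belongs to the normalizer N_G(S') if and only if inl(a) ∈ N_G(S') and h ∈ N_H(S). In other words, N_G(S') decomposes as the semidirect product of the elements of N normalizing S' with N_H(S). -/
open SemidirectProduct

private lemma mem_map_inr' {N H : Type*} [Group N] [Group H] (φ : H →* MulAut N)
    (S : Subgroup H) (x : N ⋊[φ] H) :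
    x ∈ S.map (inr : H →* N ⋊[φ] H) ↔ x.left = 1 ∧ x.right ∈ S := by
  constructor
  · rintro ⟨s, hs, rfl⟩; exact ⟨rfl, hs⟩
  · rintro ⟨h1, h2⟩
    exact ⟨x.right, h2, by ext <;> simp [h1]⟩

private lemma normalizer_key {N H : Type*} [Group N] [Group H] (φ : H →* MulAut N)
    (S : Subgroup H) (g : N ⋊[φ] H) :
    g ∈ Subgroup.normalizer ((S.map (inr : H →* N ⋊[φ] H) : Subgroup (N ⋊[φ] H)) : Set (N ⋊[φ] H)) ↔
      ((∀ s ∈ S, φ s g.left = g.left) ∧ g.right ∈ Subgroup.normalizer (S : Set H)) := by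
  rw [Subgroup.mem_normalizer_iff]
  simp only [mem_map_inr' φ S, mul_left, mul_right, inv_left, inv_right]
  set a := g.left with ha
  set h := g.right with hh
  have comp : ∀ k : H, φ (h * k) ((φ h⁻¹) a⁻¹) = φ (h * k * h⁻¹) a⁻¹ := by
    intro k
    simp [MulAut.mul_apply]
  constructor
  · intro hg
    have hnorm : h ∈ Subgroup.normalizer (S : Set H) := by
      rw [Subgroup.mem_normalizer_iff]
      intro k
      constructor
      · intro hk
        exact ((hg (inr k)).1 ⟨rfl, hk⟩).2
      · intro hk
        refine ((hg ⟨φ h⁻¹ (a⁻¹ * (φ (h * k * h⁻¹) a⁻¹)⁻¹), k⟩).2 ?_).2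
        refine ⟨?_, hk⟩
        show a * φ h (φ h⁻¹ (a⁻¹ * (φ (h * k * h⁻¹) a⁻¹)⁻¹)) * φ (h * k) (φ h⁻¹ a⁻¹) = 1
        rw [comp k]
        simp only [← MulAut.mul_apply, ← map_mul, mul_inv_cancel, map_one, MulAut.one_apply]
        group
    refine ⟨?_, hnorm⟩
    intro s hs
    have hk : h⁻¹ * s * h ∈ S := by
      have := (Subgroup.mem_normalizer_iff.1 hnorm (h⁻¹ * s * h)).2
      apply this
      have : h * (h⁻¹ * s * h) * h⁻¹ = s := by group
      rwa [this]
    have h1 : a * φ h 1 * φ (h * (h⁻¹ * s * h)) (φ h⁻¹ a⁻¹) = 1 :=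
      ((hg (inr (h⁻¹ * s * h))).1 ⟨rfl, hk⟩).1
    rw [comp, show h * (h⁻¹ * s * h) * h⁻¹ = s by group] at h1
    simp only [map_one, mul_one] at h1
    rw [map_inv, mul_inv_eq_one] at h1
    exact h1.symm
  · rintro ⟨hfix, hn⟩
    have hfix' : ∀ s ∈ S, φ s a⁻¹ = a⁻¹ := by
      intro s hs
      rw [map_inv, hfix s hs]
    intro n
    constructor
    · rintro ⟨hx, hk⟩
      have hks : h * n.right * h⁻¹ ∈ S := (Subgroup.mem_normalizer_iff.1 hn n.right).1 hk
      refine ⟨?_, hks⟩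
      rw [hx, comp, hfix' _ hks]
      simp
    · rintro ⟨h1, h2⟩
      have hk : n.right ∈ S := (Subgroup.mem_normalizer_iff.1 hn n.right).2 h2
      refine ⟨?_, hk⟩
      rw [comp, hfix' _ h2] at h1
      have h3 : φ h n.left = 1 := by
        simpa [mul_assoc] using congrArg (fun z => a⁻¹ * z * a) h1
      simpa using h3

theorem normalizer_semidirect_decomp
    {N H : Type*} [Group N] [Group H] (φ : H →* MulAut N) (S : Subgroup H) :
    ∀ (a : N) (h : H),
      inl a * inr h ∈ Subgroup.normalizer ((S.map (inr : H →* N ⋊[φ] H) : Subgroup (N ⋊[φ] H)) : Set (N ⋊[φ] H)) ↔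
        (inl a ∈ Subgroup.normalizer ((S.map (inr : H →* N ⋊[φ] H) : Subgroup (N ⋊[φ] H)) : Set (N ⋊[φ] H)) ∧ h ∈ Subgroup.normalizer (S : Set H)) := by
  intro a h
  rw [normalizer_key, normalizer_key]
  simp [mul_left, mul_right, (Subgroup.normalizer (S : Set H)).one_mem]
end

section
/- Let N and H be groups, φ : H → Aut(N) a homomorphism, and G = N ⋊_φ H the semidirect product, with canonical injections inl : N → G and inr : H → G. Let H₀ be a subgroup of H and let c : H → N be a function satisfying the cocycle condition c(hk) = c(h)·φ(h)(c(k)) for all h, k ∈ H₀. Let S be a subgroup of G whose elements are exactly the products inl(c(h))·inr(h) for h ∈ H₀. Then for a ∈ N and m ∈ H, the element inl(a)·inr(m) belongs to the normalizer N_G(S) if and only if m ∈ N_H(H₀) and for every h ∈ H₀ one has a · φ(m)(c(h)) · φ(m h m⁻¹)(a⁻¹) = c(m h m⁻¹). -/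
open SemidirectProduct

theorem mem_normalizer_cocycle_subgroup_iff
    {N H : Type*} [Group N] [Group H] (φ : H →* MulAut N) (H₀ : Subgroup H)
    (c : H → N) (hc : ∀ h ∈ H₀, ∀ k ∈ H₀, c (h * k) = c h * φ h (c k))
    (S : Subgroup (N ⋊[φ] H))
    (hS : ∀ x : N ⋊[φ] H, x ∈ S ↔ ∃ h ∈ H₀, x = inl (c h) * inr h)
    (a : N) (m : H) :
    inl a * inr m ∈ Subgroup.normalizer (S : Set (N ⋊[φ] H)) ↔
      (m ∈ Subgroup.normalizer (H₀ : Set H) ∧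
        ∀ h ∈ H₀, a * φ m (c h) * φ (m * h * m⁻¹) a⁻¹ = c (m * h * m⁻¹)) := by
  have memS : ∀ x : N ⋊[φ] H, x ∈ S ↔ x.right ∈ H₀ ∧ x.left = c x.right := by
    intro x
    rw [hS]
    constructor
    · rintro ⟨h, hh, rfl⟩
      simp [hh]
    · rintro ⟨h1, h2⟩
      exact ⟨x.right, h1, by ext <;> simp [h2]⟩
  have conj : ∀ (n : N) (k : H), (inl a * inr m) * (inl n * inr k) * (inl a * inr m)⁻¹
      = (inl (a * φ m n * φ (m * k * m⁻¹) a⁻¹) * inr (m * k * m⁻¹) : N ⋊[φ] H) := by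
    intro n k
    ext <;> simp [mul_assoc]
  rw [Subgroup.mem_normalizer_iff]
  constructor
  · intro hx
    have key : ∀ h ∈ H₀, m * h * m⁻¹ ∈ H₀ ∧
        a * φ m (c h) * φ (m * h * m⁻¹) a⁻¹ = c (m * h * m⁻¹) := by
      intro h hh
      have h1 : (inl (c h) * inr h : N ⋊[φ] H) ∈ S := (memS _).2 (by simp [hh])
      have h2 := (hx _).1 h1
      rw [conj, memS] at h2
      simpa using h2
    refine ⟨Subgroup.mem_normalizer_iff.2 fun h => ⟨fun hh => (key h hh).1, fun hh => ?_⟩,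
      fun h hh => (key h hh).2⟩
    · -- m * h * m⁻¹ ∈ H₀ → h ∈ H₀
      have hs : (inl (c (m * h * m⁻¹)) * inr (m * h * m⁻¹) : N ⋊[φ] H) ∈ S :=
        (memS _).2 (by simp [hh])
      have hmem := (hx ((inl a * inr m)⁻¹ *
          (inl (c (m * h * m⁻¹)) * inr (m * h * m⁻¹)) * (inl a * inr m))).2
        (by simpa [mul_assoc] using hs)
      rw [memS] at hmem
      have := hmem.1
      simp only [mul_right, inv_right, right_inl, right_inr, one_mul, mul_one] at this
      simpa [mul_assoc] using this
  · rintro ⟨hm, heq⟩ g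
    rw [Subgroup.mem_normalizer_iff] at hm
    have hconj := conj g.left g.right
    rw [inl_left_mul_inr_right] at hconj
    rw [memS, hconj, memS]
    simp only [mul_left, mul_right, left_inl, right_inl, left_inr, right_inr, map_one,
      MulAut.one_apply, mul_one, one_mul]
    constructor
    · rintro ⟨h1, h2⟩
      exact ⟨(hm g.right).1 h1, by rw [h2]; exact heq g.right h1⟩
    · rintro ⟨h1, h2⟩
      have hg : g.right ∈ H₀ := (hm g.right).2 h1
      refine ⟨hg, ?_⟩
      have h3 := heq g.right hg
      rw [← h3] at h2
      simpa using h2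
end
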